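/- arXiv:2403.06971 — 7 statements merged into one kernel-verified Lean document; each statement's English description precedes it below -/
import Mathlib

section
/- The pure minimax regret in the linear MSE setting equals the (r+1)-th eigenvalue of Σ^{1/2} S Σ^{1/2}: the infimum over all R ∈ ℝ^{d×r} with Rᵀ Σ R invertible of the supremum over f ∈ F_S of regret(R, f) equals λ_{r+1}(Σ^{1/2} S Σ^{1/2}). -/
/-!
Put `T = Vᵀ Σ^{1/2}`. Then `Σ = Tᵀ T` and `S⁻¹ = Tᵀ diag(λ)⁻¹ T`, so in the coordinates `x = T f`
the class `F_S` becomes the ellipsoid `∑ xᵢ² / λᵢ ≤ 1` and `fᵀ Σ f = ‖x‖²`. The regret is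
`fᵀ Σ f` minus a positive semidefinite form in `Rᵀ Σ f`. For any `R`, some nonzero `x` supported on
the first `r + 1` coordinates has `Rᵀ Σ T⁻¹ x = 0` (there are only `r` constraints); for it the
regret is `‖x‖² ≥ λ_{r+1} ∑ xᵢ² / λᵢ`. Conversely, for `R` made of the first `r` columns of `T⁻¹`
the regret is `∑_{i > r} xᵢ² ≤ λ_{r+1} ∑ xᵢ² / λᵢ`.
-/

open Matrix Finset

section QuadraticForms

variable {n m : Type*} [Fintype n] [Fintype m]

lemma dotProduct_transpose_mul_mul_mulVec (A : Matrix m n ℝ) (B : Matrix m m ℝ) (f : n → ℝ) :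
    f ⬝ᵥ ((Aᵀ * B * A) *ᵥ f) = (A *ᵥ f) ⬝ᵥ (B *ᵥ (A *ᵥ f)) := by
  rw [← mulVec_mulVec, ← mulVec_mulVec, dotProduct_mulVec, vecMul_transpose]

lemma dotProduct_transpose_mul_self_mulVec (A : Matrix m n ℝ) (f : n → ℝ) :
    f ⬝ᵥ ((Aᵀ * A) *ᵥ f) = (A *ᵥ f) ⬝ᵥ (A *ᵥ f) := by
  rw [← mulVec_mulVec, dotProduct_mulVec, vecMul_transpose]

lemma dotProduct_smul_mulVec_smul (A : Matrix n n ℝ) (c : ℝ) (f : n → ℝ) :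
    (c • f) ⬝ᵥ (A *ᵥ (c • f)) = c ^ 2 * (f ⬝ᵥ (A *ᵥ f)) := by
  rw [mulVec_smul, smul_dotProduct, dotProduct_smul, smul_eq_mul, smul_eq_mul]
  ring

lemma dotProduct_self_eq_sum_sq (x : n → ℝ) : x ⬝ᵥ x = ∑ i, x i ^ 2 := by
  simp only [dotProduct, sq]

lemma dotProduct_diagonal_mulVec [DecidableEq n] (w x : n → ℝ) :
    x ⬝ᵥ (diagonal w *ᵥ x) = ∑ i, w i * x i ^ 2 := by
  simp only [dotProduct, mulVec_diagonal]
  exact sum_congr rfl fun i _ => by ring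

lemma dotProduct_self_sub_comp_embedding [DecidableEq n] (e : m ↪ n) (x : n → ℝ) :
    x ⬝ᵥ x - (x ∘ e) ⬝ᵥ (x ∘ e) = ∑ i ∈ (univ.map e)ᶜ, x i ^ 2 := by
  rw [dotProduct_self_eq_sum_sq, dotProduct_self_eq_sum_sq, ← sum_add_sum_compl (univ.map e),
    sum_map]
  simp

end QuadraticForms

section WeightedSums

variable {ι : Type*} [Fintype ι] {μ : ι → ℝ}

lemma sum_inv_mul_sq_pos (hμ : ∀ i, 0 < μ i) {x : ι → ℝ} (hx : x ≠ 0) :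
    0 < ∑ i, (μ i)⁻¹ * x i ^ 2 := by
  obtain ⟨i, hi⟩ := Function.ne_iff.mp hx
  refine sum_pos' (fun j _ => ?_) ⟨i, mem_univ i, ?_⟩
  · have := hμ j; positivity
  · have := hμ i; simp only [Pi.zero_apply] at hi; positivity

lemma sum_compl_sq_le_mul_sum_inv_mul_sq [DecidableEq ι] (hμ : ∀ i, 0 < μ i) (s : Finset ι)
    {a : ℝ} (ha : 0 ≤ a) (hs : ∀ i ∉ s, μ i ≤ a) (x : ι → ℝ) :
    ∑ i ∈ sᶜ, x i ^ 2 ≤ a * ∑ i, (μ i)⁻¹ * x i ^ 2 := by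
  rw [mul_sum]
  calc ∑ i ∈ sᶜ, x i ^ 2 ≤ ∑ i ∈ sᶜ, a * ((μ i)⁻¹ * x i ^ 2) := by
        refine sum_le_sum fun i hi => ?_
        rw [← mul_assoc, ← div_eq_mul_inv]
        exact le_mul_of_one_le_left (sq_nonneg _)
          ((one_le_div (hμ i)).mpr (hs i (mem_compl.mp hi)))
    _ ≤ ∑ i, a * ((μ i)⁻¹ * x i ^ 2) :=
        sum_le_univ_sum_of_nonneg fun i => by have := hμ i; positivity

lemma mul_sum_inv_mul_sq_le (hμ : ∀ i, 0 < μ i) {a : ℝ} {x : ι → ℝ}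
    (hx : ∀ i, x i ≠ 0 → a ≤ μ i) : a * ∑ i, (μ i)⁻¹ * x i ^ 2 ≤ ∑ i, x i ^ 2 := by
  rw [mul_sum]
  refine sum_le_sum fun i _ => ?_
  by_cases h : x i = 0
  · simp [h]
  · calc a * ((μ i)⁻¹ * x i ^ 2) ≤ μ i * ((μ i)⁻¹ * x i ^ 2) := by
          have := hμ i; gcongr; exact hx i h
      _ = x i ^ 2 := by field_simp [(hμ i).ne']

end WeightedSums

section Ellipsoid

variable {n : Type*} [Fintype n]

def ellipsoidValues (A B : Matrix n n ℝ) : Set ℝ :=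
  {w | ∃ f : n → ℝ, f ⬝ᵥ (B *ᵥ f) ≤ 1 ∧ w = f ⬝ᵥ (A *ᵥ f)}

lemma mem_upperBounds_ellipsoidValues {A B : Matrix n n ℝ} {a : ℝ} (ha : 0 ≤ a)
    (h : ∀ f, f ⬝ᵥ (A *ᵥ f) ≤ a * (f ⬝ᵥ (B *ᵥ f))) : a ∈ upperBounds (ellipsoidValues A B) := by
  rintro _ ⟨f, hf, rfl⟩
  calc f ⬝ᵥ (A *ᵥ f) ≤ a * (f ⬝ᵥ (B *ᵥ f)) := h f
    _ ≤ a := mul_le_of_le_one_right ha hf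

lemma sSup_ellipsoidValues_le {A B : Matrix n n ℝ} {a : ℝ} (ha : 0 ≤ a)
    (h : ∀ f, f ⬝ᵥ (A *ᵥ f) ≤ a * (f ⬝ᵥ (B *ᵥ f))) : sSup (ellipsoidValues A B) ≤ a :=
  csSup_le ⟨0, 0, by simp, by simp⟩ (mem_upperBounds_ellipsoidValues ha h)

lemma le_sSup_ellipsoidValues {A B : Matrix n n ℝ} (hA : BddAbove (ellipsoidValues A B))
    {a : ℝ} {f : n → ℝ} (hf : 0 < f ⬝ᵥ (B *ᵥ f)) (h : a * (f ⬝ᵥ (B *ᵥ f)) ≤ f ⬝ᵥ (A *ᵥ f)) :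
    a ≤ sSup (ellipsoidValues A B) := by
  set c := (Real.sqrt (f ⬝ᵥ (B *ᵥ f)))⁻¹
  have hc : c ^ 2 * (f ⬝ᵥ (B *ᵥ f)) = 1 := by
    rw [inv_pow, Real.sq_sqrt hf.le, inv_mul_cancel₀ hf.ne']
  refine le_csSup_of_le hA ⟨c • f, ?_, rfl⟩ ?_
  · rw [dotProduct_smul_mulVec_smul, hc]
  · calc a = c ^ 2 * (a * (f ⬝ᵥ (B *ᵥ f))) := by rw [mul_left_comm, hc, mul_one]
      _ ≤ (c • f) ⬝ᵥ (A *ᵥ (c • f)) := by rw [dotProduct_smul_mulVec_smul]; gcongr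

end Ellipsoid

lemma exists_ne_zero_mulVec_eq_zero_of_card_lt {m n p : Type*} [Fintype m] [Fintype n]
    [Fintype p] [DecidableEq n] (B : Matrix p n ℝ) (e : m ↪ n)
    (h : Fintype.card p < Fintype.card m) :
    ∃ x ≠ 0, B *ᵥ x = 0 ∧ ∀ i, x i ≠ 0 → ∃ j, e j = i := by
  set E : Matrix n m ℝ := (1 : Matrix n n ℝ).submatrix id e
  have hker : LinearMap.ker (B * E).mulVecLin ≠ ⊥ := LinearMap.ker_ne_bot_of_finrank_lt (by
    simpa only [Module.finrank_fintype_fun_eq_card] using h)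
  obtain ⟨y, hy, hy0⟩ := (Submodule.ne_bot_iff _).mp hker
  have hEy : ∀ j, (E *ᵥ y) (e j) = y j := fun j => by
    classical
    simp [E, mulVec, dotProduct, one_apply, e.injective.eq_iff]
  refine ⟨E *ᵥ y, fun h0 => hy0 (funext fun j => by simpa [h0] using (hEy j).symm), ?_, ?_⟩
  · simpa [mulVec_mulVec] using hy
  · intro i hi
    by_contra! hne
    exact hi (sum_eq_zero fun j _ => by simp [E, one_apply, (hne j).symm])

lemma pos_of_mul_mul_transpose_eq_diagonal {n : Type*} [Fintype n] [DecidableEq n]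
    {T S : Matrix n n ℝ} (hT : IsUnit T.det) (hS : S.PosDef) {μ : n → ℝ}
    (h : T * S * Tᵀ = diagonal μ) (i : n) : 0 < μ i := by
  have hD := hS.mul_mul_conjTranspose_same
    (vecMul_injective_iff_isUnit.mpr ((isUnit_iff_isUnit_det T).mpr hT))
  rw [conjTranspose_eq_transpose_of_trivial, h] at hD
  simpa using hD.diag_pos (i := i)

lemma inv_eq_transpose_mul_diagonal_inv_mul {n : Type*} [Fintype n] [DecidableEq n]
    {T S : Matrix n n ℝ} (hT : IsUnit T.det) {μ : n → ℝ} (hμ : ∀ i, μ i ≠ 0)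
    (h : T * S * Tᵀ = diagonal μ) : S⁻¹ = Tᵀ * diagonal (fun i => (μ i)⁻¹) * T := by
  have hD : (diagonal μ)⁻¹ = diagonal fun i => (μ i)⁻¹ :=
    inv_eq_left_inv (by rw [diagonal_mul_diagonal]; simp [hμ])
  rw [← hD, ← h, Matrix.mul_inv_rev, Matrix.mul_inv_rev,
    mul_nonsing_inv_cancel_left _ _ (isUnit_det_transpose _ hT),
    nonsing_inv_mul_cancel_right _ _ hT]

section Orthogonal

variable {n : Type*} [Fintype n] [DecidableEq n] {Sigh V : Matrix n n ℝ}

lemma isUnit_det_transpose_mul (hV : V * Vᵀ = 1) (hSigh : IsUnit Sigh.det) :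
    IsUnit (Vᵀ * Sigh).det := by
  rw [det_mul]
  exact (isUnit_det_transpose _ (isUnit_det_of_right_inverse hV)).mul hSigh

lemma transpose_mul_self_eq (hSigh : Sighᵀ = Sigh) (hV : V * Vᵀ = 1) :
    (Vᵀ * Sigh)ᵀ * (Vᵀ * Sigh) = Sigh * Sigh := by
  rw [transpose_mul, hSigh, transpose_transpose, Matrix.mul_assoc, ← Matrix.mul_assoc V, hV,
    Matrix.one_mul]

lemma mul_mul_transpose_eq_diagonal (hSigh : Sighᵀ = Sigh) (hV : V * Vᵀ = 1) {S : Matrix n n ℝ}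
    {μ : n → ℝ} (h : Sigh * S * Sigh = V * diagonal μ * Vᵀ) :
    (Vᵀ * Sigh) * S * (Vᵀ * Sigh)ᵀ = diagonal μ := by
  have hVV : Vᵀ * V = 1 := mul_eq_one_comm.mp hV
  calc (Vᵀ * Sigh) * S * (Vᵀ * Sigh)ᵀ = Vᵀ * (Sigh * S * Sigh) * V := by
        simp only [transpose_mul, hSigh, transpose_transpose, Matrix.mul_assoc]
    _ = diagonal μ := by
        rw [h, ← Matrix.mul_assoc, ← Matrix.mul_assoc, hVV, Matrix.one_mul, Matrix.mul_assoc,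
          hVV, Matrix.mul_one]

end Orthogonal

section Regret

variable {n m : Type*} [Fintype n] [Fintype m] [DecidableEq m]

noncomputable def regretMatrix (Sig : Matrix n n ℝ) (R : Matrix n m ℝ) : Matrix n n ℝ :=
  Sig - Sig * R * (Rᵀ * Sig * R)⁻¹ * Rᵀ * Sig

lemma dotProduct_regretMatrix_mulVec {Sig : Matrix n n ℝ} (hSig : Sigᵀ = Sig)
    (R : Matrix n m ℝ) (f : n → ℝ) :
    f ⬝ᵥ (regretMatrix Sig R *ᵥ f) = f ⬝ᵥ (Sig *ᵥ f) -
      ((Rᵀ * Sig) *ᵥ f) ⬝ᵥ ((Rᵀ * Sig * R)⁻¹ *ᵥ ((Rᵀ * Sig) *ᵥ f)) := by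
  have h : Sig * R * (Rᵀ * Sig * R)⁻¹ * Rᵀ * Sig =
      (Rᵀ * Sig)ᵀ * (Rᵀ * Sig * R)⁻¹ * (Rᵀ * Sig) := by
    simp only [transpose_mul, transpose_transpose, hSig, Matrix.mul_assoc]
  rw [regretMatrix, sub_mulVec, dotProduct_sub, h, dotProduct_transpose_mul_mul_mulVec]

lemma dotProduct_regretMatrix_mulVec_le {Sig : Matrix n n ℝ} (hSig : Sig.PosSemidef)
    {R : Matrix n m ℝ} (hR : IsUnit (Rᵀ * Sig * R).det) (f : n → ℝ) :
    f ⬝ᵥ (regretMatrix Sig R *ᵥ f) ≤ f ⬝ᵥ (Sig *ᵥ f) := by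
  have hK : (Rᵀ * Sig * R).PosDef := by
    have := hSig.conjTranspose_mul_mul_same R
    rw [conjTranspose_eq_transpose_of_trivial] at this
    exact this.posDef_iff_isUnit.mpr ((isUnit_iff_isUnit_det _).mpr hR)
  rw [dotProduct_regretMatrix_mulVec (by simpa using hSig.isHermitian.eq)]
  simpa using hK.inv.posSemidef.dotProduct_mulVec_nonneg ((Rᵀ * Sig) *ᵥ f)

end Regret

section Whitened

variable {n m : Type*} [Fintype n] [DecidableEq n] {T : Matrix n n ℝ} {μ : n → ℝ}

lemma transpose_inv_submatrix_mul_transpose_mul_self (hT : IsUnit T.det) (e : m → n) :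
    (T⁻¹.submatrix id e)ᵀ * (Tᵀ * T) = T.submatrix e id := by
  rw [transpose_submatrix, ← submatrix_id_id (Tᵀ * T),
    ← submatrix_mul _ _ _ _ _ Function.bijective_id, ← Matrix.mul_assoc, ← transpose_mul,
    mul_nonsing_inv _ hT, transpose_one, Matrix.one_mul]

lemma dotProduct_transpose_mul_diagonal_inv_mul_mulVec (T : Matrix n n ℝ) (μ : n → ℝ) (f : n → ℝ) :
    f ⬝ᵥ ((Tᵀ * diagonal (fun i => (μ i)⁻¹) * T) *ᵥ f) = ∑ i, (μ i)⁻¹ * (T *ᵥ f) i ^ 2 := by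
  rw [dotProduct_transpose_mul_mul_mulVec, dotProduct_diagonal_mulVec]

variable [DecidableEq m]

lemma transpose_inv_submatrix_mul_mul_inv_submatrix (hT : IsUnit T.det) (e : m ↪ n) :
    (T⁻¹.submatrix id e)ᵀ * (Tᵀ * T) * T⁻¹.submatrix id e = 1 := by
  rw [transpose_inv_submatrix_mul_transpose_mul_self hT,
    ← submatrix_mul _ _ _ _ _ Function.bijective_id, mul_nonsing_inv _ hT,
    submatrix_one _ e.injective]

variable [Fintype m]

lemma dotProduct_regretMatrix_inv_submatrix_mulVec (hT : IsUnit T.det) (e : m ↪ n)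
    (f : n → ℝ) :
    f ⬝ᵥ (regretMatrix (Tᵀ * T) (T⁻¹.submatrix id e) *ᵥ f) =
      (T *ᵥ f) ⬝ᵥ (T *ᵥ f) - ((T *ᵥ f) ∘ e) ⬝ᵥ ((T *ᵥ f) ∘ e) := by
  rw [dotProduct_regretMatrix_mulVec (by simp), transpose_inv_submatrix_mul_mul_inv_submatrix hT,
    inv_one, one_mulVec, transpose_inv_submatrix_mul_transpose_mul_self hT,
    dotProduct_transpose_mul_self_mulVec]
  rfl

lemma bddAbove_ellipsoidValues_regretMatrix (hμ : ∀ i, 0 < μ i) {R : Matrix n m ℝ}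
    (hR : IsUnit (Rᵀ * (Tᵀ * T) * R).det) :
    BddAbove (ellipsoidValues (regretMatrix (Tᵀ * T) R)
      (Tᵀ * diagonal (fun i => (μ i)⁻¹) * T)) := by
  have hsum : 0 ≤ ∑ i, μ i := sum_nonneg fun i _ => (hμ i).le
  refine ⟨∑ i, μ i, mem_upperBounds_ellipsoidValues hsum fun f => ?_⟩
  have hSig : (Tᵀ * T).PosSemidef := by
    simpa [conjTranspose_eq_transpose_of_trivial] using posSemidef_conjTranspose_mul_self T
  calc f ⬝ᵥ (regretMatrix (Tᵀ * T) R *ᵥ f) ≤ f ⬝ᵥ ((Tᵀ * T) *ᵥ f) :=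
        dotProduct_regretMatrix_mulVec_le hSig hR f
    _ = ∑ i ∈ (∅ : Finset n)ᶜ, (T *ᵥ f) i ^ 2 := by
        rw [dotProduct_transpose_mul_self_mulVec, dotProduct_self_eq_sum_sq, compl_empty]
    _ ≤ _ := by
        rw [dotProduct_transpose_mul_diagonal_inv_mul_mulVec]
        exact sum_compl_sq_le_mul_sum_inv_mul_sq hμ ∅ hsum
          (fun i _ => single_le_sum (fun j _ => (hμ j).le) (mem_univ i)) _

lemma le_sSup_ellipsoidValues_regretMatrix {k : Type*} [Fintype k] (hT : IsUnit T.det)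
    (hμ : ∀ i, 0 < μ i) (e : k ↪ n) (hcard : Fintype.card m < Fintype.card k) {a : ℝ}
    (ha : ∀ j, a ≤ μ (e j)) {R : Matrix n m ℝ} (hR : IsUnit (Rᵀ * (Tᵀ * T) * R).det) :
    a ≤ sSup (ellipsoidValues (regretMatrix (Tᵀ * T) R)
      (Tᵀ * diagonal (fun i => (μ i)⁻¹) * T)) := by
  obtain ⟨x, hx0, hRx, hsupp⟩ :=
    exists_ne_zero_mulVec_eq_zero_of_card_lt (Rᵀ * (Tᵀ * T) * T⁻¹) e hcard
  have hTx : T *ᵥ (T⁻¹ *ᵥ x) = x := by rw [mulVec_mulVec, mul_nonsing_inv _ hT, one_mulVec]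
  have hRx' : (Rᵀ * (Tᵀ * T)) *ᵥ (T⁻¹ *ᵥ x) = 0 := by rwa [mulVec_mulVec]
  have hregret : (T⁻¹ *ᵥ x) ⬝ᵥ (regretMatrix (Tᵀ * T) R *ᵥ (T⁻¹ *ᵥ x)) = ∑ i, x i ^ 2 := by
    rw [dotProduct_regretMatrix_mulVec (by simp), hRx', mulVec_zero,
      dotProduct_zero, sub_zero, dotProduct_transpose_mul_self_mulVec, hTx,
      dotProduct_self_eq_sum_sq]
  refine le_sSup_ellipsoidValues (f := T⁻¹ *ᵥ x)
    (bddAbove_ellipsoidValues_regretMatrix hμ hR) ?_ ?_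
  · rw [dotProduct_transpose_mul_diagonal_inv_mul_mulVec, hTx]
    exact sum_inv_mul_sq_pos hμ hx0
  · rw [dotProduct_transpose_mul_diagonal_inv_mul_mulVec, hTx, hregret]
    refine mul_sum_inv_mul_sq_le hμ fun i hi => ?_
    obtain ⟨j, rfl⟩ := hsupp i hi
    exact ha j

lemma sSup_ellipsoidValues_regretMatrix_inv_submatrix_le (hT : IsUnit T.det)
    (hμ : ∀ i, 0 < μ i) (e : m ↪ n) {a : ℝ} (ha : 0 ≤ a) (hae : ∀ i ∉ univ.map e, μ i ≤ a) :
    sSup (ellipsoidValues (regretMatrix (Tᵀ * T) (T⁻¹.submatrix id e))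
      (Tᵀ * diagonal (fun i => (μ i)⁻¹) * T)) ≤ a := by
  refine sSup_ellipsoidValues_le ha fun f => ?_
  rw [dotProduct_regretMatrix_inv_submatrix_mulVec hT, dotProduct_self_sub_comp_embedding,
    dotProduct_transpose_mul_diagonal_inv_mul_mulVec]
  exact sum_compl_sq_le_mul_sum_inv_mul_sq hμ _ ha hae _

end Whitened

theorem stmt0_general (d r : ℕ) (hrd : r < d)
    (Sig S : Matrix (Fin d) (Fin d) ℝ)
    (hS : S.PosDef)
    (Sigh : Matrix (Fin d) (Fin d) ℝ)
    (hSigh : Sigh.PosDef) (hSighsq : Sigh * Sigh = Sig)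
    (lam : ℕ → ℝ)
    (hmono : ∀ i j : ℕ, i ≤ j → j < d → lam j ≤ lam i)
    (V : Matrix (Fin d) (Fin d) ℝ) (hV : V * Vᵀ = 1)
    (hdiag : Sigh * S * Sigh = V * Matrix.diagonal (fun i : Fin d => lam i.val) * Vᵀ) :
    sInf { v : ℝ | ∃ R : Matrix (Fin d) (Fin r) ℝ,
        IsUnit (Rᵀ * Sig * R).det ∧
        v = sSup { w : ℝ | ∃ f : Fin d → ℝ,
            f ⬝ᵥ (S⁻¹ *ᵥ f) ≤ 1 ∧
            w = f ⬝ᵥ ((Sig - Sig * R * (Rᵀ * Sig * R)⁻¹ * Rᵀ * Sig) *ᵥ f) } }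
      = lam r := by
  change sInf {v | ∃ R : Matrix (Fin d) (Fin r) ℝ, IsUnit (Rᵀ * Sig * R).det ∧
    v = sSup (ellipsoidValues (regretMatrix Sig R) S⁻¹)} = lam r
  have hSighT : Sighᵀ = Sigh := by simpa using hSigh.isHermitian.eq
  set T := Vᵀ * Sigh
  have hT : IsUnit T.det := isUnit_det_transpose_mul hV hSigh.det_pos.ne'.isUnit
  have hTST := mul_mul_transpose_eq_diagonal hSighT hV hdiag
  have hlam := pos_of_mul_mul_transpose_eq_diagonal hT hS hTST
  rw [inv_eq_transpose_mul_diagonal_inv_mul hT (fun i => (hlam i).ne') hTST, ← hSighsq,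
    ← transpose_mul_self_eq hSighT hV]
  have hlower : ∀ R : Matrix (Fin d) (Fin r) ℝ, IsUnit (Rᵀ * (Tᵀ * T) * R).det →
      lam r ≤ sSup (ellipsoidValues (regretMatrix (Tᵀ * T) R)
        (Tᵀ * diagonal (fun i : Fin d => (lam i.val)⁻¹) * T)) := fun R hR =>
    le_sSup_ellipsoidValues_regretMatrix hT hlam (Fin.castLEEmb hrd) (by simp)
      (fun j => hmono _ _ (Nat.lt_succ_iff.mp j.isLt) hrd) hR
  have htail : ∀ i ∉ univ.map (Fin.castLEEmb hrd.le), lam i.val ≤ lam r := fun i hi =>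
    hmono _ _ (not_lt.mp fun h => hi (mem_map.mpr ⟨⟨i, h⟩, mem_univ _, rfl⟩)) i.isLt
  set R0 := T⁻¹.submatrix id (Fin.castLEEmb hrd.le)
  have hR0 : IsUnit (R0ᵀ * (Tᵀ * T) * R0).det := by
    rw [transpose_inv_submatrix_mul_mul_inv_submatrix hT, det_one]
    exact isUnit_one
  have hupper := sSup_ellipsoidValues_regretMatrix_inv_submatrix_le hT hlam
    (Fin.castLEEmb hrd.le) (hlam ⟨r, hrd⟩).le htail
  refine IsLeast.csInf_eq ⟨⟨R0, hR0, (le_antisymm hupper (hlower R0 hR0)).symm⟩, ?_⟩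
  rintro _ ⟨R, hR, rfl⟩
  exact hlower R hR

/-- In the linear MSE setting, the pure minimax regret equals
`λ_{r+1}(Σ^{1/2} S Σ^{1/2})` (0-based: `lam r`), where `lam : ℕ → ℝ` lists the eigenvalues
of `Σ^{1/2} S Σ^{1/2}` in nonincreasing order (encoded via an orthogonal diagonalization),
`Sigh` denotes the symmetric positive definite square root `Σ^{1/2}`, the class `F_S` is
`{f : fᵀ S⁻¹ f ≤ 1}`, and `regret(R, f) = fᵀ (Σ − Σ R (Rᵀ Σ R)⁻¹ Rᵀ Σ) f`. -/
theorem stmt0 (d r : ℕ) (hr : 0 < r) (hrd : r < d)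
    (Sig S : Matrix (Fin d) (Fin d) ℝ)
    (hSig : Sig.PosDef) (hS : S.PosDef)
    (Sigh : Matrix (Fin d) (Fin d) ℝ)
    (hSigh : Sigh.PosDef) (hSighsq : Sigh * Sigh = Sig)
    (lam : ℕ → ℝ)
    (hmono : ∀ i j : ℕ, i ≤ j → j < d → lam j ≤ lam i)
    (V : Matrix (Fin d) (Fin d) ℝ) (hV : V * Vᵀ = 1)
    (hdiag : Sigh * S * Sigh = V * Matrix.diagonal (fun i : Fin d => lam i.val) * Vᵀ) :
    sInf { v : ℝ | ∃ R : Matrix (Fin d) (Fin r) ℝ,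
        IsUnit (Rᵀ * Sig * R).det ∧
        v = sSup { w : ℝ | ∃ f : Fin d → ℝ,
            f ⬝ᵥ (S⁻¹ *ᵥ f) ≤ 1 ∧
            w = f ⬝ᵥ ((Sig - Sig * R * (Rᵀ * Sig * R)⁻¹ * Rᵀ * Sig) *ᵥ f) } }
      = lam r :=
  stmt0_general d r hrd Sig S hS Sigh hSigh hSighsq lam hmono V hV hdiag
end

section
/- For every symmetric positive semidefinite matrix M ∈ ℝ^{d×d}, the infimum over R ∈ ℝ^{d×r} with Rᵀ Σ R invertible of Tr[(Σ − Σ R (Rᵀ Σ R)⁻¹ Rᵀ Σ) M] equals Σ_{i=r+1}^{d} λ_i(Σ^{1/2} M Σ^{1/2}), and it is attained by taking Σ^{1/2} R to have as columns r orthonormal eigenvectors of Σ^{1/2} M Σ^{1/2} corresponding to its r largest eigenvalues. -/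
/-!
Put `S = Σ^{1/2} R` and `A = Σ^{1/2} M Σ^{1/2} = V diag(λ) Vᵀ`. The objective becomes
`tr A - tr (P A)`, where `P = S (Sᵀ S)⁻¹ Sᵀ` is the orthogonal projection onto the column space
of `S`. In the eigenbasis, `tr (P A) = ∑ λ_i q_i` with `q_i` the diagonal of `Vᵀ P V`; as this is
again a symmetric idempotent of trace `r`, the `q_i` lie in `[0, 1]` and sum to `r`, so
`tr (P A) ≤ λ_1 + ⋯ + λ_r` for nonincreasing `λ`. Equality holds when `P` projects onto the
first `r` columns of `V`.
-/

open Finset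

theorem Fin.sum_univ_ite_val_lt {M : Type*} [AddCommMonoid M] {r d : ℕ} (hrd : r ≤ d) (f : ℕ → M) :
    ∑ i : Fin d, (if (i : ℕ) < r then f i else 0) = ∑ i ∈ range r, f i := by
  rw [Fin.sum_univ_eq_sum_range (fun i => if i < r then f i else 0), ← sum_range_add_sum_Ico _ hrd,
    sum_congr rfl fun i hi => if_pos (mem_range.1 hi),
    sum_congr rfl fun i hi => if_neg (mem_Ico.1 hi).1.not_gt, sum_const_zero, add_zero]

theorem sum_mul_le_sum_range_of_antitoneOn {d r : ℕ} (hrd : r < d) {w : ℕ → ℝ}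
    (hw : AntitoneOn w (Set.Iio d)) {t : Fin d → ℝ} (ht0 : ∀ i, 0 ≤ t i) (ht1 : ∀ i, t i ≤ 1)
    (ht : ∑ i, t i = r) :
    ∑ i : Fin d, w i * t i ≤ ∑ i ∈ range r, w i := by
  -- compare with the threshold `c = w r`: each term is below `c * t i`, plus `w i - c` for `i < r`
  set c := w r
  have hterm : ∀ i : Fin d, w i * t i ≤ c * t i + if (i : ℕ) < r then w i - c else 0 := by
    intro i
    split_ifs with hi
    · have : c ≤ w i := hw (by simp [hi.trans hrd]) (by simpa using hrd) hi.le
      nlinarith [ht1 i]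
    · have : w i ≤ c := hw (by simpa using hrd) (by simp) (not_lt.1 hi)
      nlinarith [ht0 i]
  calc ∑ i : Fin d, w i * t i ≤ ∑ i : Fin d, (c * t i + if (i : ℕ) < r then w i - c else 0) :=
        sum_le_sum fun i _ => hterm i
    _ = ∑ i ∈ range r, w i := by
        rw [sum_add_distrib, ← mul_sum, ht, Fin.sum_univ_ite_val_lt hrd.le (fun i => w i - c),
          sum_sub_distrib, sum_const, card_range, nsmul_eq_mul]
        ring

open Matrix

variable {m n : Type*}

theorem Matrix.diag_nonneg_of_isSymm_of_isIdempotentElem [Fintype m] {P : Matrix m m ℝ}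
    (hP : P.IsSymm) (hPP : IsIdempotentElem P) (i : m) : 0 ≤ P i i := by
  rw [← hPP.eq]
  nth_rewrite 1 [← hP.eq]
  exact sum_nonneg fun k _ => mul_self_nonneg (P k i)

theorem Matrix.diag_le_one_of_isSymm_of_isIdempotentElem [Fintype m] [DecidableEq m]
    {P : Matrix m m ℝ} (hP : P.IsSymm) (hPP : IsIdempotentElem P) (i : m) : P i i ≤ 1 := by
  simpa using diag_nonneg_of_isSymm_of_isIdempotentElem (isSymm_one.sub hP) hPP.one_sub i

theorem Matrix.isSymm_transpose_mul_mul [Fintype m] {P : Matrix m m ℝ} (hP : P.IsSymm)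
    (V : Matrix m n ℝ) : (Vᵀ * P * V).IsSymm := by
  simp only [IsSymm, transpose_mul, transpose_transpose, hP.eq, Matrix.mul_assoc]

theorem Matrix.isIdempotentElem_transpose_mul_mul [Fintype m] [Fintype n] [DecidableEq m]
    {P : Matrix m m ℝ} (hPP : IsIdempotentElem P) {V : Matrix m n ℝ} (hV : V * Vᵀ = 1) :
    IsIdempotentElem (Vᵀ * P * V) := by
  calc Vᵀ * P * V * (Vᵀ * P * V) = Vᵀ * P * (V * Vᵀ) * P * V := by simp only [Matrix.mul_assoc]
    _ = Vᵀ * P * V := by rw [hV, Matrix.mul_one, Matrix.mul_assoc Vᵀ, hPP.eq]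

theorem Matrix.trace_transpose_mul_mul [Fintype m] [Fintype n] [DecidableEq m] (P : Matrix m m ℝ)
    {V : Matrix m n ℝ} (hV : V * Vᵀ = 1) : (Vᵀ * P * V).trace = P.trace := by
  rw [trace_mul_cycle, hV, Matrix.one_mul]

theorem Matrix.trace_mul_conj_diagonal [Fintype m] [Fintype n] [DecidableEq n]
    (P : Matrix m m ℝ) (V : Matrix m n ℝ) (w : n → ℝ) :
    (P * (V * diagonal w * Vᵀ)).trace = ∑ i, w i * (Vᵀ * P * V) i i := by
  rw [← Matrix.mul_assoc, trace_mul_cycle, ← Matrix.mul_assoc]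
  simp [trace, mul_diagonal, mul_comm]

theorem Matrix.IsSymm.transpose_mul_mul_self_mul [Fintype m] {S : Matrix m m ℝ} (hS : S.IsSymm)
    (R : Matrix m n ℝ) : Rᵀ * (S * S) * R = (S * R)ᵀ * (S * R) := by
  rw [transpose_mul, hS.eq]; simp only [Matrix.mul_assoc]

-- A projection only when `Sᵀ * S` is invertible: otherwise `⁻¹` returns `0` and so does `orthProj`.
noncomputable def Matrix.orthProj [Fintype m] [Fintype n] [DecidableEq n] (S : Matrix m n ℝ) :
    Matrix m m ℝ := S * (Sᵀ * S)⁻¹ * Sᵀ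

section OrthProj

variable [Fintype m] [Fintype n] [DecidableEq n]

theorem Matrix.isSymm_orthProj (S : Matrix m n ℝ) : S.orthProj.IsSymm := by
  simp only [IsSymm, orthProj, transpose_mul, transpose_transpose, transpose_nonsing_inv,
    Matrix.mul_assoc]

theorem Matrix.isIdempotentElem_orthProj {S : Matrix m n ℝ} (hS : IsUnit (Sᵀ * S).det) :
    IsIdempotentElem S.orthProj := by
  have h : (Sᵀ * S)⁻¹ * (Sᵀ * S) = 1 := nonsing_inv_mul _ hS
  calc S.orthProj * S.orthProj = S * ((Sᵀ * S)⁻¹ * (Sᵀ * S)) * (Sᵀ * S)⁻¹ * Sᵀ := by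
        simp only [orthProj, Matrix.mul_assoc]
    _ = S.orthProj := by rw [h, Matrix.mul_one, orthProj]

theorem Matrix.trace_orthProj {S : Matrix m n ℝ} (hS : IsUnit (Sᵀ * S).det) :
    S.orthProj.trace = Fintype.card n := by
  rw [orthProj, trace_mul_cycle, mul_nonsing_inv _ hS, trace_one]

theorem Matrix.orthProj_of_transpose_mul_self_eq_one {S : Matrix m n ℝ} (hS : Sᵀ * S = 1) :
    S.orthProj = S * Sᵀ := by
  rw [orthProj, hS, inv_one, Matrix.mul_one]

theorem Matrix.trace_sub_mul_eq_trace_sub_trace_orthProj_mul {S : Matrix m m ℝ} (hS : S.IsSymm)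
    (M : Matrix m m ℝ) (R : Matrix m n ℝ) :
    ((S * S - S * S * R * (Rᵀ * (S * S) * R)⁻¹ * Rᵀ * (S * S)) * M).trace
      = (S * M * S).trace - ((S * R).orthProj * (S * M * S)).trace := by
  rw [hS.transpose_mul_mul_self_mul, Matrix.sub_mul, trace_sub, orthProj, transpose_mul, hS.eq]
  congr 1
  · rw [Matrix.mul_assoc, trace_mul_comm]
  · set N := (Rᵀ * S * (S * R))⁻¹
    rw [show S * S * R * N * Rᵀ * (S * S) * M = S * (S * R * N * (Rᵀ * S) * (S * M)) by
      simp only [Matrix.mul_assoc], trace_mul_comm]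
    simp only [Matrix.mul_assoc]

theorem Matrix.trace_sub_mul_eq_sum_sub_sum_diag [DecidableEq m] {S M V : Matrix m m ℝ}
    {w : m → ℝ} (hS : S.IsSymm) (hdiag : S * M * S = V * diagonal w * Vᵀ) (hV : Vᵀ * V = 1)
    (R : Matrix m n ℝ) :
    ((S * S - S * S * R * (Rᵀ * (S * S) * R)⁻¹ * Rᵀ * (S * S)) * M).trace
      = ∑ i, w i - ∑ i, w i * (Vᵀ * (S * R).orthProj * V) i i := by
  rw [trace_sub_mul_eq_trace_sub_trace_orthProj_mul hS, hdiag, trace_mul_conj_diagonal,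
    trace_mul_cycle, hV, Matrix.one_mul, trace_diagonal]

end OrthProj

theorem Matrix.sum_mul_diag_conj_orthProj_le [Fintype m] [DecidableEq m] {d r : ℕ} (hrd : r < d)
    {w : ℕ → ℝ} (hw : AntitoneOn w (Set.Iio d)) {S : Matrix m (Fin r) ℝ} (hS : IsUnit (Sᵀ * S).det)
    {V : Matrix m (Fin d) ℝ} (hV : V * Vᵀ = 1) :
    ∑ i : Fin d, w i * (Vᵀ * S.orthProj * V) i i ≤ ∑ i ∈ range r, w i := by
  have hsymm := isSymm_transpose_mul_mul (isSymm_orthProj S) V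
  have hidem := isIdempotentElem_transpose_mul_mul (isIdempotentElem_orthProj hS) hV
  refine sum_mul_le_sum_range_of_antitoneOn hrd hw
    (diag_nonneg_of_isSymm_of_isIdempotentElem hsymm hidem)
    (diag_le_one_of_isSymm_of_isIdempotentElem hsymm hidem) ?_
  change trace _ = _
  rw [trace_transpose_mul_mul _ hV, trace_orthProj hS, Fintype.card_fin]

theorem Matrix.transpose_mul_self_submatrix_id_eq_one [Fintype m] [Fintype n] [DecidableEq n]
    {k : Type*} [DecidableEq k] {V : Matrix m n ℝ} (hV : Vᵀ * V = 1) {e : k → n}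
    (he : Function.Injective e) : (V.submatrix id e)ᵀ * V.submatrix id e = 1 := by
  rw [transpose_submatrix, ← submatrix_mul _ _ _ _ _ Function.bijective_id, hV, submatrix_one _ he]

theorem Matrix.sum_mul_diag_conj_submatrix_castLE {d r : ℕ} (hrd : r ≤ d) (w : ℕ → ℝ)
    {V : Matrix (Fin d) (Fin d) ℝ} (hV : Vᵀ * V = 1) :
    ∑ i : Fin d, w i * (Vᵀ * (V.submatrix id (Fin.castLE hrd) *
      (V.submatrix id (Fin.castLE hrd))ᵀ) * V) i i = ∑ i ∈ range r, w i := by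
  set V₁ := V.submatrix id (Fin.castLE hrd)
  have hE : Vᵀ * V₁ = (1 : Matrix (Fin d) (Fin d) ℝ).submatrix id (Fin.castLE hrd) := by
    rw [← hV, submatrix_mul _ _ _ _ _ Function.bijective_id, submatrix_id_id]
  have hdiag (i : Fin d) : (Vᵀ * (V₁ * V₁ᵀ) * V) i i = if (i : ℕ) < r then 1 else 0 := by
    rw [show Vᵀ * (V₁ * V₁ᵀ) * V = (Vᵀ * V₁) * (Vᵀ * V₁)ᵀ by
      simp only [transpose_mul, transpose_transpose, Matrix.mul_assoc], hE]
    simp only [mul_apply, transpose_apply, submatrix_apply, id, one_apply, Fin.ext_iff,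
      Fin.val_castLE, mul_ite, mul_one, mul_zero, ← ite_and, and_self]
    rw [Fin.sum_univ_eq_sum_range (fun k => if (i : ℕ) = k then (1 : ℝ) else 0), sum_ite_eq]
    simp only [mem_range]
  simp only [hdiag, mul_ite, mul_one, mul_zero]
  exact Fin.sum_univ_ite_val_lt hrd w

theorem stmt5_general (d r : ℕ) (hrd : r < d)
    (Sig : Matrix (Fin d) (Fin d) ℝ)
    (Sigh : Matrix (Fin d) (Fin d) ℝ) (hSigh : Sigh.PosDef) (hSighsq : Sigh * Sigh = Sig)
    (M : Matrix (Fin d) (Fin d) ℝ)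
    (lam : ℕ → ℝ) (hmono : ∀ i j : ℕ, i ≤ j → j < d → lam j ≤ lam i)
    (V : Matrix (Fin d) (Fin d) ℝ) (hV : V * Vᵀ = 1)
    (hdiag : Sigh * M * Sigh = V * Matrix.diagonal (fun i : Fin d => lam i.val) * Vᵀ) :
    IsLeast { v : ℝ | ∃ R : Matrix (Fin d) (Fin r) ℝ,
        IsUnit (Rᵀ * Sig * R).det ∧
        v = Matrix.trace ((Sig - Sig * R * (Rᵀ * Sig * R)⁻¹ * Rᵀ * Sig) * M) }
      (∑ i ∈ Finset.Ico r d, lam i)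
    ∧ (let R : Matrix (Fin d) (Fin r) ℝ := Sigh⁻¹ * V.submatrix id (Fin.castLE hrd.le)
       IsUnit (Rᵀ * Sig * R).det ∧
       Matrix.trace ((Sig - Sig * R * (Rᵀ * Sig * R)⁻¹ * Rᵀ * Sig) * M)
         = ∑ i ∈ Finset.Ico r d, lam i) := by
  subst hSighsq
  have hSymm : Sigh.IsSymm := by simpa using hSigh.isHermitian
  have hVtV : Vᵀ * V = 1 := mul_eq_one_comm.mp hV
  have hvalue (R : Matrix (Fin d) (Fin r) ℝ) :
      ((Sigh * Sigh - Sigh * Sigh * R * (Rᵀ * (Sigh * Sigh) * R)⁻¹ * Rᵀ * (Sigh * Sigh)) * M).trace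
        = ∑ i ∈ range d, lam i - ∑ i : Fin d, lam i * (Vᵀ * (Sigh * R).orthProj * V) i i := by
    rw [trace_sub_mul_eq_sum_sub_sum_diag hSymm hdiag hVtV, Fin.sum_univ_eq_sum_range]
  have hV₁ := transpose_mul_self_submatrix_id_eq_one hVtV (Fin.castLE_injective hrd.le)
  have htop := sum_mul_diag_conj_submatrix_castLE hrd.le lam hVtV
  set V₁ := V.submatrix id (Fin.castLE hrd.le)
  have hSR₀ : Sigh * (Sigh⁻¹ * V₁) = V₁ :=
    mul_nonsing_inv_cancel_left _ _ ((isUnit_iff_isUnit_det _).1 hSigh.isUnit)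
  have hdet₀ : IsUnit ((Sigh⁻¹ * V₁)ᵀ * (Sigh * Sigh) * (Sigh⁻¹ * V₁)).det := by
    rw [hSymm.transpose_mul_mul_self_mul, hSR₀, hV₁, det_one]
    exact isUnit_one
  have hval₀ := hvalue (Sigh⁻¹ * V₁)
  rw [hSR₀, orthProj_of_transpose_mul_self_eq_one hV₁, htop, ← sum_range_add_sum_Ico _ hrd.le,
    add_sub_cancel_left] at hval₀
  refine ⟨⟨⟨_, hdet₀, hval₀.symm⟩, ?_⟩, hdet₀, hval₀⟩
  rintro v ⟨R, hdet, rfl⟩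
  rw [hSymm.transpose_mul_mul_self_mul] at hdet
  have hle := sum_mul_diag_conj_orthProj_le hrd (fun i _ j hj hij => hmono i j hij hj) hdet hV
  rw [hvalue, ← sum_range_add_sum_Ico _ hrd.le]
  linarith

/-- For a symmetric positive semidefinite `M`, the infimum over
`R ∈ ℝ^{d×r}` with `Rᵀ Σ R` invertible of `Tr[(Σ − Σ R (Rᵀ Σ R)⁻¹ Rᵀ Σ) M]` equals
`Σ_{i=r+1}^{d} λ_i(Σ^{1/2} M Σ^{1/2})` (stated as `IsLeast`, so the infimum is attained),
and it is attained at `R = Σ^{-1/2} V_{1:r}` where the columns of the orthogonal `V` are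
eigenvectors of `Σ^{1/2} M Σ^{1/2}` ordered by nonincreasing eigenvalues `lam`
(so `Σ^{1/2} R` has as columns the top `r` orthonormal eigenvectors). -/
theorem stmt5 (d r : ℕ) (hr : 0 < r) (hrd : r < d)
    (Sig : Matrix (Fin d) (Fin d) ℝ) (hSig : Sig.PosDef)
    (Sigh : Matrix (Fin d) (Fin d) ℝ) (hSigh : Sigh.PosDef) (hSighsq : Sigh * Sigh = Sig)
    (M : Matrix (Fin d) (Fin d) ℝ) (hM : M.PosSemidef)
    (lam : ℕ → ℝ) (hmono : ∀ i j : ℕ, i ≤ j → j < d → lam j ≤ lam i)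
    (V : Matrix (Fin d) (Fin d) ℝ) (hV : V * Vᵀ = 1)
    (hdiag : Sigh * M * Sigh = V * Matrix.diagonal (fun i : Fin d => lam i.val) * Vᵀ) :
    IsLeast { v : ℝ | ∃ R : Matrix (Fin d) (Fin r) ℝ,
        IsUnit (Rᵀ * Sig * R).det ∧
        v = Matrix.trace ((Sig - Sig * R * (Rᵀ * Sig * R)⁻¹ * Rᵀ * Sig) * M) }
      (∑ i ∈ Finset.Ico r d, lam i)
    ∧ (let R : Matrix (Fin d) (Fin r) ℝ := Sigh⁻¹ * V.submatrix id (Fin.castLE hrd.le)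
       IsUnit (Rᵀ * Sig * R).det ∧
       Matrix.trace ((Sig - Sig * R * (Rᵀ * Sig * R)⁻¹ * Rᵀ * Sig) * M)
         = ∑ i ∈ Finset.Ico r d, lam i) :=
  stmt5_general d r hrd Sig Sigh hSigh hSighsq M lam hmono V hV hdiag
end

section
/- The trace-constrained maximization of the sum of the d − r smallest eigenvalues has value: sup over symmetric positive semidefinite Σ̃ ∈ ℝ^{d×d} with Tr[Σ̃] ≤ 1 of Σ_{i=r+1}^{d} λ_i(Σ^{1/2} Σ̃ Σ^{1/2}) = max over ℓ ∈ {r+1, …, d} of (ℓ − r) / Σ_{i=1}^{ℓ} (1/λ_i(Σ)). -/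
/-!
Let `M = Σ^{1/2} T Σ^{1/2}` have eigenvalues `μ₁ ≥ ⋯ ≥ μ_d ≥ 0`. Then `Tr T = Tr (Σ⁻¹ M)`, and the
squared entries of the orthogonal matrix relating the eigenbases of `Σ` and `M` form a doubly
stochastic matrix; by Birkhoff's theorem and the rearrangement inequality, `∑ μᵢ / λᵢ ≤ Tr T ≤ 1`.
Summation by parts shows that under this constraint `∑_{i > r} μᵢ` is at most the best value over
the extreme profiles `μ = c · 𝟙_{i ≤ ℓ}`, which is `(ℓ - r) / ∑_{i ≤ ℓ} 1/λᵢ`; each profile is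
realised by `T = Σ^{-1/2} M Σ^{-1/2}` with `M` diagonal in the eigenbasis of `Σ`.
-/

open Matrix

/-- The eigenvalues of a real symmetric matrix listed in nonincreasing order (0-based);
junk value `0` for non-Hermitian matrices and out-of-range indices. -/
noncomputable def eigsDesc {d : ℕ} (A : Matrix (Fin d) (Fin d) ℝ) : ℕ → ℝ :=
  fun i =>
    (List.insertionSort (· ≥ ·)
      (List.ofFn (fun j : Fin d =>
        if hA : A.IsHermitian then hA.eigenvalues j else 0))).getD i 0

open Finset

theorem sum_range_mul_nonneg_of_antitoneOn {α : Type*} [CommRing α] [PartialOrder α]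
    [IsOrderedRing α] {f g : ℕ → α} {n : ℕ} (hf : AntitoneOn f (Set.Iio n))
    (hf0 : ∀ i < n, 0 ≤ f i) (hg : ∀ m ≤ n, 0 ≤ ∑ i ∈ range m, g i) :
    0 ≤ ∑ i ∈ range n, f i * g i := by
  rcases Nat.eq_zero_or_pos n with rfl | hn
  · simp
  simp_rw [← smul_eq_mul]
  rw [sum_range_by_parts, sub_nonneg]
  refine le_trans (sum_nonpos fun i hi => ?_) (smul_nonneg (hf0 _ (by omega)) (hg n le_rfl))
  have hi : i + 1 < n := by rw [mem_range] at hi; omega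
  exact smul_nonpos_of_nonpos_of_nonneg
    (sub_nonpos.mpr (hf (by simp; omega) (by simp; omega) (Nat.le_succ i))) (hg _ hi.le)

theorem sum_range_ite_le {M : Type*} [AddCommMonoid M] (f : ℕ → M) (r k : ℕ) :
    ∑ i ∈ range k, (if r ≤ i then f i else 0) = ∑ i ∈ Ico r k, f i := by
  rw [← sum_filter]
  congr 1
  ext i
  simp only [mem_filter, mem_range, mem_Ico]
  omega

/-- Dual certificate: `t / λᵢ - 𝟙_{r ≤ i}`, whose partial sums are nonnegative. -/
theorem sum_Ico_le_of_sum_div_le_one {lam μ : ℕ → ℝ} {r d : ℕ} {t : ℝ} (hrd : r < d)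
    (hlam : ∀ i < d, 0 < lam i) (hμ : AntitoneOn μ (Set.Iio d)) (hμ0 : ∀ i < d, 0 ≤ μ i)
    (ht : ∀ ℓ, r < ℓ → ℓ ≤ d → (ℓ - r : ℝ) / ∑ i ∈ range ℓ, 1 / lam i ≤ t)
    (hμlam : ∑ i ∈ range d, μ i / lam i ≤ 1) :
    ∑ i ∈ Ico r d, μ i ≤ t := by
  have hsum : ∀ ℓ ≤ d, 0 ≤ ∑ i ∈ range ℓ, 1 / lam i := fun ℓ hℓ =>
    sum_nonneg fun i hi => (one_div_pos.mpr (hlam i (by simp at hi; omega))).le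
  have ht' : ∀ ℓ, r < ℓ → ℓ ≤ d → (ℓ - r : ℝ) ≤ t * ∑ i ∈ range ℓ, 1 / lam i := by
    intro ℓ hrℓ hℓd
    have hpos : 0 < ∑ i ∈ range ℓ, 1 / lam i :=
      sum_pos (fun i hi => one_div_pos.mpr (hlam i (by simp at hi; omega))) (by simp; omega)
    exact (div_le_iff₀ hpos).mp (ht ℓ hrℓ hℓd)
  have ht0 : 0 ≤ t := le_trans (div_nonneg (by simp [hrd.le]) (hsum d le_rfl)) (ht d hrd le_rfl)
  have key : 0 ≤ ∑ i ∈ range d, μ i * (t * (1 / lam i) - if r ≤ i then 1 else 0) := by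
    refine sum_range_mul_nonneg_of_antitoneOn hμ hμ0 fun m hm => ?_
    rw [sum_sub_distrib, ← mul_sum, sum_range_ite_le]
    rcases le_or_gt m r with hmr | hrm
    · rw [Ico_eq_empty_of_le hmr, sum_empty, sub_zero]
      exact mul_nonneg ht0 (hsum m hm)
    · simpa [Nat.cast_sub hrm.le] using ht' m hrm hm
  have expand : ∑ i ∈ range d, μ i * (t * (1 / lam i) - if r ≤ i then 1 else 0)
      = t * ∑ i ∈ range d, μ i / lam i - ∑ i ∈ Ico r d, μ i := by
    simp only [mul_sub, mul_ite, mul_one, mul_zero, sum_sub_distrib, sum_range_ite_le, mul_sum]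
    congr 1
    exact sum_congr rfl fun i _ => by ring
  nlinarith

theorem Antivary.sum_mul_le_sum_mulVec_mul {R n : Type*} [Field R] [LinearOrder R]
    [IsStrictOrderedRing R] [Fintype n] [DecidableEq n] {f g : n → R} (hfg : Antivary f g)
    {S : Matrix n n R} (hS : S ∈ doublyStochastic R n) :
    ∑ i, f i * g i ≤ ∑ i, (S *ᵥ f) i * g i := by
  have hconvex : Convex R {S : Matrix n n R | ∑ i, f i * g i ≤ ∑ i, (S *ᵥ f) i * g i} :=
    convex_halfSpace_ge ⟨fun A B => by simp [add_mulVec, add_mul, sum_add_distrib],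
      fun c A => by simp [smul_mulVec, mul_sum, mul_assoc]⟩ _
  rw [← SetLike.mem_coe, doublyStochastic_eq_convexHull_permMatrix] at hS
  refine convexHull_min ?_ hconvex hS
  rintro _ ⟨σ, rfl⟩
  simpa [permMatrix_mulVec] using hfg.sum_mul_le_sum_comp_perm_mul (σ := σ)

section OrthogonalConj

variable {n R : Type*} [Fintype n] [DecidableEq n]

theorem conj_diagonal_mul_conj_diagonal [CommRing R] {V : Matrix n n R} (hV : Vᵀ * V = 1)
    (a b : n → R) :
    V * diagonal a * Vᵀ * (V * diagonal b * Vᵀ) = V * diagonal (a * b) * Vᵀ := by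
  rw [Matrix.mul_assoc (V * diagonal a), ← Matrix.mul_assoc Vᵀ, ← Matrix.mul_assoc Vᵀ, hV,
    Matrix.one_mul, ← Matrix.mul_assoc, Matrix.mul_assoc V, diagonal_mul_diagonal']
  rfl

theorem transpose_mul_conj_diagonal_mul [CommRing R] {V : Matrix n n R} (hV : Vᵀ * V = 1)
    (a : n → R) : Vᵀ * (V * diagonal a * Vᵀ) * V = diagonal a := by
  rw [Matrix.mul_assoc, Matrix.mul_assoc, hV, Matrix.mul_one, ← Matrix.mul_assoc, hV,
    Matrix.one_mul]

theorem trace_conj_diagonal [CommRing R] {V : Matrix n n R} (hV : Vᵀ * V = 1) (a : n → R) :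
    (V * diagonal a * Vᵀ).trace = ∑ i, a i := by
  rw [trace_mul_comm, ← Matrix.mul_assoc, hV, Matrix.one_mul, trace_diagonal]

theorem inv_conj_diagonal [Field R] {V : Matrix n n R} (hV : V * Vᵀ = 1) {a : n → R}
    (ha : ∀ i, a i ≠ 0) :
    (V * diagonal a * Vᵀ)⁻¹ = V * diagonal (fun i => (a i)⁻¹) * Vᵀ := by
  refine inv_eq_left_inv ?_
  have : (fun i => (a i)⁻¹) * a = 1 := funext fun i => inv_mul_cancel₀ (ha i)
  rw [conj_diagonal_mul_conj_diagonal (mul_eq_one_comm.mp hV), this, Pi.one_def, diagonal_one,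
    Matrix.mul_one, hV]

theorem trace_inv_mul_conj [Field R] {A : Matrix n n R} (hA : IsUnit A) (T : Matrix n n R) :
    ((A * A)⁻¹ * (A * T * A)).trace = T.trace := by
  have hdet : IsUnit A.det := (isUnit_iff_isUnit_det A).mp hA
  rw [Matrix.mul_inv_rev, Matrix.mul_assoc, Matrix.mul_assoc A, ← Matrix.mul_assoc A⁻¹ A,
    nonsing_inv_mul _ hdet, Matrix.one_mul, ← Matrix.mul_assoc, trace_mul_comm,
    ← Matrix.mul_assoc, mul_nonsing_inv _ hdet, Matrix.one_mul]

theorem posSemidef_conj_diagonal (V : Matrix n n ℝ) {a : n → ℝ} (ha : ∀ i, 0 ≤ a i) :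
    (V * diagonal a * Vᵀ).PosSemidef := by
  simpa [conjTranspose_eq_transpose_of_trivial] using
    (posSemidef_diagonal_iff.mpr ha).mul_mul_conjTranspose_same V

theorem pos_of_posDef_conj_diagonal {A V : Matrix n n ℝ} {a : n → ℝ} (hA : A.PosDef)
    (hV : V * Vᵀ = 1) (hAV : A = V * diagonal a * Vᵀ) (i : n) : 0 < a i := by
  have hV' : Vᵀ * V = 1 := mul_eq_one_comm.mp hV
  have hinj : Function.Injective V.mulVec := fun x y hxy => by
    simpa [mulVec_mulVec, hV'] using congrArg (Vᵀ *ᵥ ·) hxy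
  have := hA.conjTranspose_mul_mul_same hinj
  rw [hAV, conjTranspose_eq_transpose_of_trivial, transpose_mul_conj_diagonal_mul hV',
    posDef_diagonal_iff] at this
  exact this i

theorem nonneg_of_posSemidef_conj_diagonal {A V : Matrix n n ℝ} {a : n → ℝ} (hA : A.PosSemidef)
    (hV : V * Vᵀ = 1) (hAV : A = V * diagonal a * Vᵀ) (i : n) : 0 ≤ a i := by
  have := hA.conjTranspose_mul_mul_same V
  rw [hAV, conjTranspose_eq_transpose_of_trivial,
    transpose_mul_conj_diagonal_mul (mul_eq_one_comm.mp hV), posSemidef_diagonal_iff] at this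
  exact this i

theorem hadamard_self_mem_doublyStochastic {Q : Matrix n n ℝ} (hQ : Q * Qᵀ = 1) :
    Q ⊙ Q ∈ doublyStochastic ℝ n := by
  have hQ' : Qᵀ * Q = 1 := mul_eq_one_comm.mp hQ
  refine mem_doublyStochastic_iff_sum.mpr ⟨fun i j => mul_self_nonneg _, fun i => ?_, fun j => ?_⟩
  · simpa [mul_apply, one_apply] using congrFun (congrFun hQ i) i
  · simpa [mul_apply, one_apply] using congrFun (congrFun hQ' j) j

/-- Ruhe's trace inequality. With `Q = Vᵀ W` the trace is `∑ⱼ aⱼ ((Q ⊙ Q) b)ⱼ`. -/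
theorem sum_mul_le_trace_conj_diagonal_mul {V W : Matrix n n ℝ} (hV : V * Vᵀ = 1)
    (hW : W * Wᵀ = 1) {a b : n → ℝ} (hab : Antivary a b) :
    ∑ i, a i * b i ≤ (V * diagonal a * Vᵀ * (W * diagonal b * Wᵀ)).trace := by
  set Q := Vᵀ * W
  have hQ : Q * Qᵀ = 1 := by
    simp only [Q, transpose_mul, transpose_transpose, Matrix.mul_assoc]
    rw [← Matrix.mul_assoc W, hW, Matrix.one_mul, mul_eq_one_comm.mp hV]
  have htrace : (V * diagonal a * Vᵀ * (W * diagonal b * Wᵀ)).trace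
      = ∑ j, ((Q ⊙ Q) *ᵥ b) j * a j := by
    have : V * diagonal a * Vᵀ * (W * diagonal b * Wᵀ)
        = V * (diagonal a * (Q * diagonal b * Qᵀ)) * Vᵀ := by
      simp only [Q, transpose_mul, transpose_transpose, Matrix.mul_assoc, hV, Matrix.mul_one]
    rw [this, trace_mul_comm, ← Matrix.mul_assoc, mul_eq_one_comm.mp hV, Matrix.one_mul]
    simp [trace, mul_apply, mulVec, dotProduct, diagonal, mul_comm, mul_left_comm, mul_sum]
  simp_rw [htrace, mul_comm (a _)]
  exact hab.symm.sum_mul_le_sum_mulVec_mul (hadamard_self_mem_doublyStochastic hQ)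

theorem Matrix.IsHermitian.exists_orthogonal_conj_diagonal {M : Matrix n n ℝ}
    (hM : M.IsHermitian) :
    ∃ U : Matrix n n ℝ, U * Uᵀ = 1 ∧ M = U * diagonal hM.eigenvalues * Uᵀ := by
  refine ⟨hM.eigenvectorUnitary, ?_, ?_⟩
  · simpa [star_eq_conjTranspose] using Unitary.mul_star_self_of_mem hM.eigenvectorUnitary.2
  · simpa [Unitary.conjStarAlgAut_apply, star_eq_conjTranspose] using hM.spectral_theorem

end OrthogonalConj

section SortedSpectrum

variable {d : ℕ}

theorem Matrix.IsHermitian.exists_orthogonal_conj_diagonal_antitone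
    {M : Matrix (Fin d) (Fin d) ℝ} (hM : M.IsHermitian) :
    ∃ U : Matrix (Fin d) (Fin d) ℝ, ∃ w : Fin d → ℝ,
      U * Uᵀ = 1 ∧ Antitone w ∧ M = U * diagonal w * Uᵀ := by
  obtain ⟨U, hU, hMU⟩ := hM.exists_orthogonal_conj_diagonal
  generalize hM.eigenvalues = e at hMU
  subst hMU
  set σ := Tuple.sort (fun i => -e i)
  refine ⟨U.submatrix id σ, e ∘ σ, ?_, ?_, ?_⟩
  · ext i j
    simpa [mul_apply, ← Matrix.one_apply] using
      (Equiv.sum_comp σ fun k => U i k * U j k).trans (congrFun (congrFun hU i) j)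
  · intro i j hij
    simpa using Tuple.monotone_sort (fun i => -e i) hij
  · ext i j
    simpa [mul_apply, diagonal] using (Equiv.sum_comp σ fun k => U i k * e k * U j k).symm

/-- Both `eigsDesc M` and `w` list the roots of the characteristic polynomial in nonincreasing
order. -/
theorem eigsDesc_eq_of_eq_conj_diagonal {M U : Matrix (Fin d) (Fin d) ℝ} {w : Fin d → ℝ}
    (hU : U * Uᵀ = 1) (hw : Antitone w) (hMU : M = U * diagonal w * Uᵀ) (i : Fin d) :
    eigsDesc M i = w i := by
  have hM : M.IsHermitian := by
    simpa [hMU] using isHermitian_mul_mul_conjTranspose U (isHermitian_diagonal w)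
  have hcharpoly : M.charpoly = (diagonal w).charpoly := by
    rw [hMU, charpoly_mul_comm, ← Matrix.mul_assoc, mul_eq_one_comm.mp hU, Matrix.one_mul]
  have hroots : (univ.val.map hM.eigenvalues : Multiset ℝ) = univ.val.map w := by
    have := hM.roots_charpoly_eq_eigenvalues
    rw [hcharpoly, charpoly_diagonal, Polynomial.roots_prod _ _ (prod_ne_zero_iff.mpr
      fun i _ => Polynomial.X_sub_C_ne_zero (w i))] at this
    simpa using this.symm
  have hsort : List.insertionSort (· ≥ ·) (List.ofFn hM.eigenvalues) = List.ofFn w := by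
    have hperm : (List.ofFn hM.eigenvalues).Perm (List.ofFn w) := by
      rw [← Multiset.coe_eq_coe, ← Fin.univ_val_map, ← Fin.univ_val_map, hroots]
    have : Std.Antisymm (α := ℝ) (· ≥ ·) := ⟨fun _ _ h1 h2 => le_antisymm h2 h1⟩
    exact List.Perm.eq_of_pairwise' (List.pairwise_insertionSort _ _)
      (List.pairwise_ofFn.mpr fun _ _ hab => hw hab.le) ((List.perm_insertionSort _ _).trans hperm)
  unfold eigsDesc
  simp only [dif_pos hM, hsort]
  simp

end SortedSpectrum

section Covariance

variable {d : ℕ} {Sig Sigh V : Matrix (Fin d) (Fin d) ℝ} {lam : ℕ → ℝ}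

theorem sum_Ico_eigsDesc_conj_le (hSigh : Sigh.PosDef) (hSighsq : Sigh * Sigh = Sig)
    (hlam : ∀ i < d, 0 < lam i) (hmono : AntitoneOn lam (Set.Iio d)) (hV : V * Vᵀ = 1)
    (hdiag : Sig = V * diagonal (fun i : Fin d => lam i) * Vᵀ)
    {T : Matrix (Fin d) (Fin d) ℝ} (hT : T.PosSemidef) (htr : T.trace ≤ 1) {r : ℕ} (hrd : r < d)
    {t : ℝ} (ht : ∀ ℓ, r < ℓ → ℓ ≤ d → (ℓ - r : ℝ) / ∑ i ∈ range ℓ, 1 / lam i ≤ t) :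
    ∑ i ∈ Ico r d, eigsDesc (Sigh * T * Sigh) i ≤ t := by
  set M := Sigh * T * Sigh
  have hM : M.PosSemidef := by
    have := hT.mul_mul_conjTranspose_same Sigh
    rwa [hSigh.isHermitian.eq] at this
  obtain ⟨W, μ, hW, hμ, hMW⟩ := hM.isHermitian.exists_orthogonal_conj_diagonal_antitone
  have heig := eigsDesc_eq_of_eq_conj_diagonal hW hμ hMW
  refine sum_Ico_le_of_sum_div_le_one hrd hlam (fun i hi j hj hij => ?_) (fun i hi => ?_) ht ?_
  · rw [heig ⟨i, hi⟩, heig ⟨j, hj⟩]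
    exact hμ hij
  · rw [heig ⟨i, hi⟩]
    exact nonneg_of_posSemidef_conj_diagonal hM hW hMW _
  have hanti : Antivary (fun i : Fin d => (lam i)⁻¹) μ :=
    Monotone.antivary (fun i j hij => inv_anti₀ (hlam j j.2) (hmono i.2 j.2 hij)) hμ
  calc ∑ i ∈ range d, eigsDesc M i / lam i
      = ∑ i : Fin d, (lam i)⁻¹ * μ i := by
        rw [← Fin.sum_univ_eq_sum_range]
        simp [heig, div_eq_inv_mul]
    _ ≤ (V * diagonal (fun i : Fin d => (lam i)⁻¹) * Vᵀ * M).trace := by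
        rw [hMW]
        exact sum_mul_le_trace_conj_diagonal_mul hV hW hanti
    _ = (Sig⁻¹ * M).trace := by
        rw [hdiag, inv_conj_diagonal hV fun i => (hlam i i.2).ne']
    _ = T.trace := by rw [← hSighsq, trace_inv_mul_conj hSigh.isUnit]
    _ ≤ 1 := htr

theorem exists_sum_Ico_eigsDesc_conj_eq (hSigh : Sigh.PosDef) (hSighsq : Sigh * Sigh = Sig)
    (hlam : ∀ i < d, 0 < lam i) (hV : V * Vᵀ = 1)
    (hdiag : Sig = V * diagonal (fun i : Fin d => lam i) * Vᵀ) {r ℓ : ℕ} (hrℓ : r < ℓ)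
    (hℓd : ℓ ≤ d) :
    ∃ T : Matrix (Fin d) (Fin d) ℝ, T.PosSemidef ∧ T.trace ≤ 1 ∧
      (ℓ - r : ℝ) / ∑ i ∈ range ℓ, 1 / lam i = ∑ i ∈ Ico r d, eigsDesc (Sigh * T * Sigh) i := by
  set s := ∑ i ∈ range ℓ, 1 / lam i
  have hs : 0 < s :=
    sum_pos (fun i hi => one_div_pos.mpr (hlam i (by simp at hi; omega))) (by simp; omega)
  set h : Fin d → ℝ := fun i => if (i : ℕ) < ℓ then s⁻¹ else 0
  have hh0 : ∀ i, 0 ≤ h i := fun i => by positivity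
  have hh : Antitone h := fun i j hij => by
    simp only [h]
    split_ifs <;> first | rfl | positivity | omega
  set M := V * diagonal h * Vᵀ
  have hunit := hSigh.isUnit
  have hdet : IsUnit Sigh.det := (isUnit_iff_isUnit_det Sigh).mp hunit
  have hcancel : Sigh * (Sigh⁻¹ * M * Sigh⁻¹) * Sigh = M := by
    simp only [← Matrix.mul_assoc, mul_nonsing_inv _ hdet, Matrix.one_mul]
    simp only [Matrix.mul_assoc, nonsing_inv_mul _ hdet, Matrix.mul_one]
  refine ⟨Sigh⁻¹ * M * Sigh⁻¹, ?_, ?_, ?_⟩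
  · have := (posSemidef_conj_diagonal V hh0).mul_mul_conjTranspose_same Sigh⁻¹
    rwa [conjTranspose_nonsing_inv, hSigh.isHermitian.eq] at this
  · have hV' := mul_eq_one_comm.mp hV
    rw [← trace_inv_mul_conj hunit, hcancel, hSighsq, hdiag,
      inv_conj_diagonal hV fun i => (hlam i i.2).ne', conj_diagonal_mul_conj_diagonal hV',
      trace_conj_diagonal hV']
    simp only [Pi.mul_apply, h, mul_ite, mul_zero]
    rw [Fin.sum_univ_eq_sum_range (fun i => if i < ℓ then (lam i)⁻¹ * s⁻¹ else 0), ← sum_filter,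
      range_eq_Ico, Ico_filter_lt_of_le_right hℓd, ← range_eq_Ico, ← sum_mul,
      show ∑ i ∈ range ℓ, (lam i)⁻¹ = s by simp [s], mul_inv_cancel₀ hs.ne']
  · have heig := eigsDesc_eq_of_eq_conj_diagonal hV hh rfl
    rw [hcancel, sum_congr rfl (g := fun i => if i < ℓ then s⁻¹ else 0)
      fun i hi => heig ⟨i, (mem_Ico.mp hi).2⟩]
    rw [← sum_filter, Ico_filter_lt_of_le_right hℓd, sum_const, Nat.card_Ico, nsmul_eq_mul,
      Nat.cast_sub hrℓ.le, div_eq_mul_inv]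

end Covariance

theorem stmt6_general (d r : ℕ) (hrd : r < d)
    (Sig : Matrix (Fin d) (Fin d) ℝ) (hSig : Sig.PosDef)
    (Sigh : Matrix (Fin d) (Fin d) ℝ) (hSigh : Sigh.PosDef) (hSighsq : Sigh * Sigh = Sig)
    (lam : ℕ → ℝ) (hmono : ∀ i j : ℕ, i ≤ j → j < d → lam j ≤ lam i)
    (V : Matrix (Fin d) (Fin d) ℝ) (hV : V * Vᵀ = 1)
    (hdiag : Sig = V * Matrix.diagonal (fun i : Fin d => lam i.val) * Vᵀ) :
    sSup { v : ℝ | ∃ T : Matrix (Fin d) (Fin d) ℝ, T.PosSemidef ∧ T.trace ≤ 1 ∧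
        v = ∑ i ∈ Finset.Ico r d, eigsDesc (Sigh * T * Sigh) i }
      = sSup { w : ℝ | ∃ ℓ : ℕ, r < ℓ ∧ ℓ ≤ d ∧
          w = ((ℓ : ℝ) - r) / ∑ i ∈ Finset.range ℓ, 1 / lam i } := by
  have hlam : ∀ i < d, 0 < lam i := fun i hi => pos_of_posDef_conj_diagonal hSig hV hdiag ⟨i, hi⟩
  set B := { w : ℝ | ∃ ℓ : ℕ, r < ℓ ∧ ℓ ≤ d ∧
    w = ((ℓ : ℝ) - r) / ∑ i ∈ Finset.range ℓ, 1 / lam i }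
  have hBfin : B.Finite :=
    ((Set.finite_Iic d).image fun ℓ : ℕ => ((ℓ : ℝ) - r) / ∑ i ∈ range ℓ, 1 / lam i).subset
      fun _ ⟨ℓ, _, hℓd, hw⟩ => ⟨ℓ, hℓd, hw.symm⟩
  have hmax : sSup B ∈ B := Set.Nonempty.csSup_mem ⟨_, d, hrd, le_rfl, rfl⟩ hBfin
  refine csSup_eq_csSup_of_forall_exists_le ?_ ?_
  · rintro _ ⟨T, hT, htr, rfl⟩
    exact ⟨sSup B, hmax, sum_Ico_eigsDesc_conj_le hSigh hSighsq hlam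
      (fun i _ j hj hij => hmono i j hij hj) hV hdiag hT htr hrd
      fun ℓ hrℓ hℓd => le_csSup hBfin.bddAbove ⟨ℓ, hrℓ, hℓd, rfl⟩⟩
  · rintro _ ⟨ℓ, hrℓ, hℓd, rfl⟩
    obtain ⟨T, hT, htr, hval⟩ :=
      exists_sum_Ico_eigsDesc_conj_eq hSigh hSighsq hlam hV hdiag hrℓ hℓd
    exact ⟨_, ⟨T, hT, htr, rfl⟩, hval.le⟩

/-- Trace-constrained maximization of the sum of the `d − r` smallest
eigenvalues: the supremum over symmetric positive semidefinite `T` with `Tr[T] ≤ 1` of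
`Σ_{i=r+1}^{d} λ_i(Σ^{1/2} T Σ^{1/2})` equals
`max_{ℓ ∈ {r+1,…,d}} (ℓ − r) / Σ_{i=1}^{ℓ} 1/λ_i(Σ)`, where `lam : ℕ → ℝ` lists the
eigenvalues of `Σ` in nonincreasing order (0-based) and `Sigh = Σ^{1/2}`. -/
theorem stmt6 (d r : ℕ) (hr : 0 < r) (hrd : r < d)
    (Sig : Matrix (Fin d) (Fin d) ℝ) (hSig : Sig.PosDef)
    (Sigh : Matrix (Fin d) (Fin d) ℝ) (hSigh : Sigh.PosDef) (hSighsq : Sigh * Sigh = Sig)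
    (lam : ℕ → ℝ) (hmono : ∀ i j : ℕ, i ≤ j → j < d → lam j ≤ lam i)
    (V : Matrix (Fin d) (Fin d) ℝ) (hV : V * Vᵀ = 1)
    (hdiag : Sig = V * Matrix.diagonal (fun i : Fin d => lam i.val) * Vᵀ) :
    sSup { v : ℝ | ∃ T : Matrix (Fin d) (Fin d) ℝ, T.PosSemidef ∧ T.trace ≤ 1 ∧
        v = ∑ i ∈ Finset.Ico r d, eigsDesc (Sigh * T * Sigh) i }
      = sSup { w : ℝ | ∃ ℓ : ℕ, r < ℓ ∧ ℓ ≤ d ∧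
          w = ((ℓ : ℝ) - r) / ∑ i ∈ Finset.range ℓ, 1 / lam i } :=
  stmt6_general d r hrd Sig hSig Sigh hSigh hSighsq lam hmono V hV hdiag
end

section
/- Let ℓ* ∈ {r+1, …, d} maximize ℓ ↦ (ℓ − r)/Σ_{i=1}^{ℓ}(1/λ_i(Σ)) over {r+1, …, d}, let V be an orthogonal matrix whose columns v_1, …, v_d are eigenvectors of Σ ordered by nonincreasing eigenvalue, and set Σ̃* = (Σ_{i=1}^{ℓ*} 1/λ_i(Σ))⁻¹ · V diag(1/λ_1(Σ), …, 1/λ_{ℓ*}(Σ), 0, …, 0) Vᵀ. Then Σ̃* is symmetric positive semidefinite, Tr[Σ̃*] = 1, and Σ_{i=r+1}^{d} λ_i(Σ^{1/2} Σ̃* Σ^{1/2}) = (ℓ* − r)/Σ_{i=1}^{ℓ*}(1/λ_i(Σ)). -/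
/-!
Everything is diagonal in the eigenbasis `V`. With `c = ∑_{i<ℓ*} 1/λ_i`, the matrix `T*` is
`V diag(f_i/λ_i) Vᵀ` where `f_i = c⁻¹` for `i < ℓ*` and `0` otherwise, and by uniqueness of
the positive semidefinite square root `Σ^{1/2} = V diag(√λ_i) Vᵀ`. Hence
`Σ^{1/2} T* Σ^{1/2} = V diag(f) Vᵀ`, whose characteristic polynomial is that of `diag(f)`; as
`f` is already nonincreasing, its sorted eigenvalues are `f` itself, and those with index in
`[r, d)` sum to `(ℓ* - r) c⁻¹`.
-/

open Matrix

theorem List.insertionSort_ge_ofFn_eq_ofFn_of_map_eq {α : Type*} [LinearOrder α] {d : ℕ}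
    {f g : Fin d → α} (hfg : Finset.univ.val.map f = Finset.univ.val.map g) (hg : Antitone g) :
    (List.ofFn f).insertionSort (· ≥ ·) = List.ofFn g := by
  refine List.Perm.eq_of_sortedGE List.sortedGE_insertionSort hg.sortedGE_ofFn
    ((List.perm_insertionSort _ _).trans (Multiset.coe_eq_coe.mp ?_))
  simpa only [← Fin.univ_val_map] using hfg

theorem Finset.sum_Ico_ite_lt {M : Type*} [AddCommMonoid M] {a l d : ℕ} (hl : l ≤ d)
    (f : ℕ → M) :
    ∑ i ∈ Finset.Ico a d, (if i < l then f i else 0) = ∑ i ∈ Finset.Ico a l, f i := by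
  rw [← Finset.sum_filter]
  congr 1
  ext i
  simp only [Finset.mem_filter, Finset.mem_Ico]
  omega

namespace Matrix

section OrthogonalConjugation

variable {n : Type*} [Fintype n] [DecidableEq n] {V : Matrix n n ℝ}

theorem conj_mul_conj_of_mul_transpose_eq_one (hV : V * Vᵀ = 1) (A B : Matrix n n ℝ) :
    (V * A * Vᵀ) * (V * B * Vᵀ) = V * (A * B) * Vᵀ := by
  simp only [Matrix.mul_assoc, ← Matrix.mul_assoc Vᵀ, mul_eq_one_comm.mp hV, Matrix.one_mul]

theorem trace_conj_of_mul_transpose_eq_one (hV : V * Vᵀ = 1) (A : Matrix n n ℝ) :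
    (V * A * Vᵀ).trace = A.trace := by
  rw [trace_mul_cycle, mul_eq_one_comm.mp hV, Matrix.one_mul]

theorem charpoly_conj_of_mul_transpose_eq_one (hV : V * Vᵀ = 1) (A : Matrix n n ℝ) :
    (V * A * Vᵀ).charpoly = A.charpoly := by
  rw [charpoly_mul_comm, ← Matrix.mul_assoc, mul_eq_one_comm.mp hV, Matrix.one_mul]

theorem posDef_conj_iff_of_mul_transpose_eq_one (hV : V * Vᵀ = 1) {A : Matrix n n ℝ} :
    (V * A * Vᵀ).PosDef ↔ A.PosDef := by
  have hU : IsUnit V := ⟨⟨V, Vᵀ, hV, mul_eq_one_comm.mp hV⟩, rfl⟩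
  simpa [star_eq_conjTranspose] using hU.posDef_star_right_conjugate_iff (x := A)

theorem posSemidef_conj_iff_of_mul_transpose_eq_one (hV : V * Vᵀ = 1) {A : Matrix n n ℝ} :
    (V * A * Vᵀ).PosSemidef ↔ A.PosSemidef := by
  have hU : IsUnit V := ⟨⟨V, Vᵀ, hV, mul_eq_one_comm.mp hV⟩, rfl⟩
  simpa [star_eq_conjTranspose] using hU.posSemidef_star_right_conjugate_iff (x := A)

theorem isHermitian_conj_diagonal (V : Matrix n n ℝ) (e : n → ℝ) :
    (V * diagonal e * Vᵀ).IsHermitian := by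
  simpa using isHermitian_mul_mul_conjTranspose V (isHermitian_diagonal e)

theorem IsHermitian.map_eigenvalues_conj_diagonal (hV : V * Vᵀ = 1) {e : n → ℝ}
    (hA : (V * diagonal e * Vᵀ).IsHermitian) :
    Finset.univ.val.map hA.eigenvalues = Finset.univ.val.map e := by
  have hroots := hA.roots_charpoly_eq_eigenvalues
  rw [charpoly_conj_of_mul_transpose_eq_one hV, charpoly_diagonal, Polynomial.roots_prod _ _
    (Finset.prod_ne_zero_iff.mpr fun i _ => Polynomial.X_sub_C_ne_zero (e i))] at hroots
  simpa using hroots.symm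

open scoped MatrixOrder in
theorem eq_conj_diagonal_sqrt_of_mul_self_eq (hV : V * Vᵀ = 1) {lam : n → ℝ}
    (hlam : 0 ≤ lam) {S : Matrix n n ℝ} (hS : S.PosSemidef)
    (hSS : S * S = V * diagonal lam * Vᵀ) :
    S = V * diagonal (fun i => √(lam i)) * Vᵀ := by
  have hsqrt : (V * diagonal (fun i => √(lam i)) * Vᵀ).PosSemidef :=
    (posSemidef_conj_iff_of_mul_transpose_eq_one hV).mpr
      (PosSemidef.diagonal fun i => Real.sqrt_nonneg _)
  refine (CFC.sq_eq_sq_iff S _ hS.nonneg hsqrt.nonneg).mp ?_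
  rw [sq, sq, hSS, conj_mul_conj_of_mul_transpose_eq_one hV, diagonal_mul_diagonal]
  simp_rw [Real.mul_self_sqrt (hlam _)]

theorem conj_diagonal_sqrt_mul_conj_diagonal_div_mul (hV : V * Vᵀ = 1) {lam : n → ℝ}
    (hlam : ∀ i, 0 < lam i) (f : n → ℝ) :
    V * diagonal (fun i => √(lam i)) * Vᵀ * (V * diagonal (fun i => f i / lam i) * Vᵀ) *
      (V * diagonal (fun i => √(lam i)) * Vᵀ) = V * diagonal f * Vᵀ := by
  rw [conj_mul_conj_of_mul_transpose_eq_one hV, conj_mul_conj_of_mul_transpose_eq_one hV,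
    diagonal_mul_diagonal, diagonal_mul_diagonal]
  refine congrArg (fun D => V * diagonal D * Vᵀ) (funext fun i => ?_)
  rw [mul_comm, ← mul_assoc, Real.mul_self_sqrt (hlam i).le, mul_div_cancel₀ _ (hlam i).ne']

end OrthogonalConjugation

theorem eigsDesc_conj_diagonal {d : ℕ} {V : Matrix (Fin d) (Fin d) ℝ} (hV : V * Vᵀ = 1)
    {e : Fin d → ℝ} (he : Antitone e) {i : ℕ} (hi : i < d) :
    eigsDesc (V * diagonal e * Vᵀ) i = e ⟨i, hi⟩ := by
  have hA := isHermitian_conj_diagonal V e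
  simp only [eigsDesc, dif_pos hA,
    List.insertionSort_ge_ofFn_eq_ofFn_of_map_eq (hA.map_eigenvalues_conj_diagonal hV) he]
  rw [List.getD_eq_getElem _ _ (by simpa using hi), List.getElem_ofFn]

theorem sum_Ico_eigsDesc_conj_diagonal_ite_lt {d r l : ℕ} {V : Matrix (Fin d) (Fin d) ℝ}
    (hV : V * Vᵀ = 1) {x : ℝ} (hx : 0 ≤ x) (hrl : r ≤ l) (hl : l ≤ d) :
    ∑ i ∈ Finset.Ico r d,
        eigsDesc (V * diagonal (fun i : Fin d => if i.val < l then x else 0) * Vᵀ) i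
      = ((l : ℝ) - r) * x := by
  have hanti : Antitone fun i : Fin d => if i.val < l then x else 0 := by
    intro i j (hij : i.val ≤ j.val)
    dsimp only
    split_ifs <;> first | rfl | exact hx | omega
  have heig : ∀ i ∈ Finset.Ico r d,
      eigsDesc (V * diagonal (fun i : Fin d => if i.val < l then x else 0) * Vᵀ) i =
        if i < l then x else 0 :=
    fun i hi => eigsDesc_conj_diagonal hV hanti (Finset.mem_Ico.mp hi).2
  rw [Finset.sum_congr rfl heig, Finset.sum_Ico_ite_lt hl (fun _ => x), Finset.sum_const,
    Nat.card_Ico, nsmul_eq_mul, Nat.cast_sub hrl]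

end Matrix

theorem stmt7_general (d r : ℕ)
    (Sig : Matrix (Fin d) (Fin d) ℝ) (hSig : Sig.PosDef)
    (Sigh : Matrix (Fin d) (Fin d) ℝ) (hSigh : Sigh.PosDef) (hSighsq : Sigh * Sigh = Sig)
    (lam : ℕ → ℝ)
    (V : Matrix (Fin d) (Fin d) ℝ) (hV : V * Vᵀ = 1)
    (hdiag : Sig = V * Matrix.diagonal (fun i : Fin d => lam i.val) * Vᵀ)
    (lstar : ℕ) (hl1 : r < lstar) (hl2 : lstar ≤ d) :
    let Tstar : Matrix (Fin d) (Fin d) ℝ :=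
      (∑ i ∈ Finset.range lstar, 1 / lam i)⁻¹ •
        (V * Matrix.diagonal (fun i : Fin d => if i.val < lstar then 1 / lam i.val else 0)
          * Vᵀ)
    Tstar.PosSemidef ∧ Tstar.trace = 1 ∧
      ∑ i ∈ Finset.Ico r d, eigsDesc (Sigh * Tstar * Sigh) i
        = ((lstar : ℝ) - r) / ∑ i ∈ Finset.range lstar, 1 / lam i := by
  intro Tstar
  set c : ℝ := ∑ i ∈ Finset.range lstar, 1 / lam i
  set f : Fin d → ℝ := fun i => if i.val < lstar then c⁻¹ else 0
  have hlam : ∀ i : Fin d, 0 < lam i :=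
    posDef_diagonal_iff.mp ((posDef_conj_iff_of_mul_transpose_eq_one hV).mp (hdiag ▸ hSig))
  have hc : 0 < c := Finset.sum_pos
    (fun i hi => one_div_pos.mpr (hlam ⟨i, (Finset.mem_range.mp hi).trans_le hl2⟩))
    ⟨0, Finset.mem_range.mpr (by omega)⟩
  have hT : Tstar = V * diagonal (fun i => f i / lam i) * Vᵀ := by
    change c⁻¹ • _ = _
    rw [← Matrix.smul_mul, ← Matrix.mul_smul, ← diagonal_smul]
    congr 3 with i
    simp [f, div_eq_mul_inv]
  have hSigh' : Sigh = V * diagonal (fun i : Fin d => √(lam i)) * Vᵀ :=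
    eq_conj_diagonal_sqrt_of_mul_self_eq hV (fun i => (hlam i).le) hSigh.posSemidef
      (hSighsq.trans hdiag)
  refine ⟨?_, ?_, ?_⟩
  · rw [hT, posSemidef_conj_iff_of_mul_transpose_eq_one hV]
    refine PosSemidef.diagonal fun i => div_nonneg ?_ (hlam i).le
    dsimp only [f]
    split_ifs <;> positivity
  · rw [hT, trace_conj_of_mul_transpose_eq_one hV, trace_diagonal,
      Fin.sum_univ_eq_sum_range (fun i => (if i < lstar then c⁻¹ else 0) / lam i),
      Finset.range_eq_Ico]
    simp only [ite_div, zero_div]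
    rw [Finset.sum_Ico_ite_lt hl2, ← Finset.range_eq_Ico]
    simp_rw [div_eq_mul_one_div c⁻¹]
    rw [← Finset.mul_sum, inv_mul_cancel₀ hc.ne']
  · rw [hT, hSigh', conj_diagonal_sqrt_mul_conj_diagonal_div_mul hV hlam,
      sum_Ico_eigsDesc_conj_diagonal_ite_lt hV (inv_nonneg.mpr hc.le) hl1.le hl2, div_eq_mul_inv]

/-- Let `ℓ* ∈ {r+1,…,d}` maximize `ℓ ↦ (ℓ−r)/Σ_{i=1}^{ℓ} 1/λ_i(Σ)`, let `V`
be orthogonal with columns eigenvectors of `Σ` ordered by nonincreasing eigenvalues `lam`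
(0-based), and set `T* = (Σ_{i=1}^{ℓ*} 1/λ_i)⁻¹ · V diag(1/λ_1,…,1/λ_{ℓ*},0,…,0) Vᵀ`.
Then `T*` is symmetric positive semidefinite, `Tr[T*] = 1`, and
`Σ_{i=r+1}^{d} λ_i(Σ^{1/2} T* Σ^{1/2}) = (ℓ*−r)/Σ_{i=1}^{ℓ*} 1/λ_i`. -/
theorem stmt7 (d r : ℕ) (hr : 0 < r) (hrd : r < d)
    (Sig : Matrix (Fin d) (Fin d) ℝ) (hSig : Sig.PosDef)
    (Sigh : Matrix (Fin d) (Fin d) ℝ) (hSigh : Sigh.PosDef) (hSighsq : Sigh * Sigh = Sig)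
    (lam : ℕ → ℝ) (hmono : ∀ i j : ℕ, i ≤ j → j < d → lam j ≤ lam i)
    (V : Matrix (Fin d) (Fin d) ℝ) (hV : V * Vᵀ = 1)
    (hdiag : Sig = V * Matrix.diagonal (fun i : Fin d => lam i.val) * Vᵀ)
    (lstar : ℕ) (hl1 : r < lstar) (hl2 : lstar ≤ d)
    (hmax : ∀ ℓ : ℕ, r < ℓ → ℓ ≤ d →
      ((ℓ : ℝ) - r) / ∑ i ∈ Finset.range ℓ, 1 / lam i
        ≤ ((lstar : ℝ) - r) / ∑ i ∈ Finset.range lstar, 1 / lam i) :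
    let Tstar : Matrix (Fin d) (Fin d) ℝ :=
      (∑ i ∈ Finset.range lstar, 1 / lam i)⁻¹ •
        (V * Matrix.diagonal (fun i : Fin d => if i.val < lstar then 1 / lam i.val else 0)
          * Vᵀ)
    Tstar.PosSemidef ∧ Tstar.trace = 1 ∧
      ∑ i ∈ Finset.Ico r d, eigsDesc (Sigh * Tstar * Sigh) i
        = ((lstar : ℝ) - r) / ∑ i ∈ Finset.range lstar, 1 / lam i :=
  stmt7_general d r Sig hSig Sigh hSigh hSighsq lam V hV hdiag lstar hl1 hl2
end

section
/- An index ℓ ∈ {r+1, …, d} maximizes a_ℓ = (ℓ − r)/Σ_{i=1}^{ℓ}(1/λ_i) over {r+1, …, d} if and only if (ℓ − r)/λ_ℓ ≤ Σ_{i=1}^{ℓ}(1/λ_i), and either ℓ = d or Σ_{i=1}^{ℓ}(1/λ_i) ≤ (ℓ − r)/λ_{ℓ+1}. In particular, every ℓ satisfying these two conditions attains the same value of a_ℓ. -/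
/-!
Write `S ℓ = Σ_{i<ℓ} 1/λ_i` (`invSum`) and `g m = λ_m S m - (m - r)` (`invSumGap`). Then
`a_{m+1} - a_m = g m / (λ_m S_m S_{m+1})`, so `a` increases exactly where `g ≥ 0`, and since
`λ` is nonincreasing, `g (m+1) ≤ λ_m S_{m+1} - (m + 1 - r) = g m`. Hence `a` is unimodal: it
rises while `g ≥ 0` and falls afterwards, and its maximizers are the indices `ℓ` with
`g (ℓ-1) ≥ 0 ≥ g ℓ`, which are the two conditions of the statement (for `ℓ = r + 1` the first
is automatic, as `g r = λ_r S_r ≥ 0`).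
-/

open Finset

theorem le_of_forall_le_add_one_of_le {β : Type*} [Preorder β] {f : ℕ → β} {i j : ℕ}
    (hij : i ≤ j) (h : ∀ m, i ≤ m → m < j → f m ≤ f (m + 1)) : f i ≤ f j := by
  induction j, hij using Nat.le_induction with
  | base => exact le_rfl
  | succ j hij ih =>
    exact (ih fun m him hmj => h m him (by omega)).trans (h j hij j.lt_succ_self)

theorem forall_le_iff_of_sub_eq_mul_of_antitoneOn {a g : ℕ → ℝ} {p q ℓ : ℕ}
    (hstep : ∀ m, p ≤ m → m < q → ∃ c, 0 < c ∧ a (m + 1) - a m = c * g m)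
    (hg : AntitoneOn g (Set.Ico p q)) (hpℓ : p ≤ ℓ) (hℓq : ℓ ≤ q) :
    (∀ k, p ≤ k → k ≤ q → a k ≤ a ℓ) ↔ (ℓ = p ∨ 0 ≤ g (ℓ - 1)) ∧ (ℓ = q ∨ g ℓ ≤ 0) := by
  have up : ∀ m, p ≤ m → m < q → (a m ≤ a (m + 1) ↔ 0 ≤ g m) := fun m hpm hmq => by
    obtain ⟨c, hc, hdiff⟩ := hstep m hpm hmq
    rw [← sub_nonneg, hdiff, mul_nonneg_iff_of_pos_left hc]
  have down : ∀ m, p ≤ m → m < q → (a (m + 1) ≤ a m ↔ g m ≤ 0) := fun m hpm hmq => by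
    obtain ⟨c, hc, hdiff⟩ := hstep m hpm hmq
    rw [← sub_nonpos, hdiff, ← neg_nonneg, ← mul_neg, mul_nonneg_iff_of_pos_left hc, neg_nonneg]
  constructor
  · intro hmax
    refine ⟨?_, ?_⟩
    · rcases hpℓ.eq_or_lt with rfl | hlt
      · exact .inl rfl
      · obtain ⟨m, rfl⟩ : ∃ m, ℓ = m + 1 := ⟨ℓ - 1, by omega⟩
        exact .inr ((up m (by omega) (by omega)).1 (hmax m (by omega) (by omega)))
    · rcases hℓq.eq_or_lt with rfl | hlt
      · exact .inl rfl
      · exact .inr ((down ℓ hpℓ hlt).1 (hmax (ℓ + 1) (by omega) hlt))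
  · rintro ⟨hleft, hright⟩ k hpk hkq
    rcases le_total k ℓ with hkℓ | hℓk
    · refine le_of_forall_le_add_one_of_le hkℓ
        fun m hkm hmℓ => (up m (by omega) (by omega)).2 ?_
      have hgℓ : 0 ≤ g (ℓ - 1) := hleft.resolve_left (by omega)
      exact hgℓ.trans (hg ⟨by omega, by omega⟩ ⟨by omega, by omega⟩ (by omega))
    · refine le_of_forall_le_add_one_of_le (β := ℝᵒᵈ) hℓk
        fun m hℓm hmk => (down m (by omega) (by omega)).2 ?_
      have hgℓ : g ℓ ≤ 0 := hright.resolve_left (by omega)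
      exact (hg ⟨hpℓ, by omega⟩ ⟨by omega, by omega⟩ hℓm).trans hgℓ

noncomputable def invSum (lam : ℕ → ℝ) (n : ℕ) : ℝ := ∑ i ∈ range n, 1 / lam i

noncomputable def invSumGap (lam : ℕ → ℝ) (r m : ℕ) : ℝ := invSum lam m * lam m - ((m : ℝ) - r)

section InvSum

variable {lam : ℕ → ℝ} {r m : ℕ}

theorem invSum_succ (lam : ℕ → ℝ) (n : ℕ) : invSum lam (n + 1) = invSum lam n + 1 / lam n :=
  sum_range_succ _ n

theorem invSum_nonneg {n : ℕ} (h : ∀ i < n, 0 ≤ lam i) : 0 ≤ invSum lam n :=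
  sum_nonneg fun i hi => one_div_nonneg.2 (h i (mem_range.1 hi))

theorem invSum_pos {n : ℕ} (hn : 0 < n) (h : ∀ i < n, 0 < lam i) : 0 < invSum lam n :=
  sum_pos (fun i hi => one_div_pos.2 (h i (mem_range.1 hi))) (nonempty_range_iff.2 hn.ne')

theorem div_invSum_succ_sub_div_invSum (hlam : 0 < lam m) (hS : 0 < invSum lam m) :
    (((m + 1 : ℕ) : ℝ) - r) / invSum lam (m + 1) - ((m : ℝ) - r) / invSum lam m
      = (lam m * invSum lam m * invSum lam (m + 1))⁻¹ * invSumGap lam r m := by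
  have hS' : 0 < invSum lam m + 1 / lam m := by positivity
  rw [invSumGap, invSum_succ]
  push_cast
  field_simp
  ring

theorem invSumGap_succ_le (hanti : lam (m + 1) ≤ lam m) (hlam : 0 < lam m)
    (hS : 0 ≤ invSum lam (m + 1)) : invSumGap lam r (m + 1) ≤ invSumGap lam r m := by
  have hshift : invSum lam (m + 1) * lam m = invSum lam m * lam m + 1 := by
    rw [invSum_succ, add_mul, one_div_mul_cancel hlam.ne']
  calc invSumGap lam r (m + 1)
      ≤ invSum lam (m + 1) * lam m - (((m + 1 : ℕ) : ℝ) - r) := by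
        unfold invSumGap; gcongr
    _ = invSumGap lam r m := by rw [hshift, invSumGap]; push_cast; ring

theorem div_le_invSum_succ_iff (hlam : 0 < lam m) :
    (((m + 1 : ℕ) : ℝ) - r) / lam m ≤ invSum lam (m + 1) ↔ 0 ≤ invSumGap lam r m := by
  rw [div_le_iff₀ hlam, invSum_succ, add_mul, one_div_mul_cancel hlam.ne', invSumGap]
  push_cast
  constructor <;> intro h <;> linarith

theorem invSum_le_div_iff (hlam : 0 < lam m) :
    invSum lam m ≤ ((m : ℝ) - r) / lam m ↔ invSumGap lam r m ≤ 0 := by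
  rw [le_div_iff₀ hlam, invSumGap, sub_nonpos]

theorem invSumGap_self_nonneg (h : ∀ i ≤ r, 0 ≤ lam i) : 0 ≤ invSumGap lam r r := by
  rw [invSumGap, sub_self, sub_zero]
  exact mul_nonneg (invSum_nonneg fun i hi => h i hi.le) (h r le_rfl)

end InvSum

theorem forall_div_invSum_le_iff {d r ℓ : ℕ} {lam : ℕ → ℝ} (hpos : ∀ i < d, 0 < lam i)
    (hmono : ∀ i j, i ≤ j → j < d → lam j ≤ lam i) (hrℓ : r < ℓ) (hℓd : ℓ ≤ d) :
    (∀ k, r < k → k ≤ d → ((k : ℝ) - r) / invSum lam k ≤ ((ℓ : ℝ) - r) / invSum lam ℓ) ↔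
      ((ℓ : ℝ) - r) / lam (ℓ - 1) ≤ invSum lam ℓ ∧
        (ℓ = d ∨ invSum lam ℓ ≤ ((ℓ : ℝ) - r) / lam ℓ) := by
  have hstep : ∀ k, r + 1 ≤ k → k < d → ∃ c, 0 < c ∧
      (((k + 1 : ℕ) : ℝ) - r) / invSum lam (k + 1) - ((k : ℝ) - r) / invSum lam k
        = c * invSumGap lam r k := fun k hrk hkd =>
    have hS := invSum_pos (by omega) fun i hi => hpos i (by omega)
    have hS' := invSum_pos k.succ_pos fun i hi => hpos i (by omega)
    ⟨_, inv_pos.2 (mul_pos (mul_pos (hpos k hkd) hS) hS'),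
      div_invSum_succ_sub_div_invSum (hpos k hkd) hS⟩
  have hgap : AntitoneOn (invSumGap lam r) (Set.Ico (r + 1) d) := fun i _ j ⟨_, hjd⟩ hij =>
    le_of_forall_le_add_one_of_le (β := ℝᵒᵈ) hij fun k _ hkj =>
      invSumGap_succ_le (hmono k (k + 1) k.le_succ (by omega)) (hpos k (by omega))
        (invSum_nonneg fun i hi => (hpos i (by omega)).le)
  obtain ⟨m, rfl⟩ : ∃ m, ℓ = m + 1 := ⟨ℓ - 1, by omega⟩
  refine (forall_le_iff_of_sub_eq_mul_of_antitoneOn hstep hgap hrℓ hℓd).trans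
    (and_congr ?_ (or_congr_right' fun hne => (invSum_le_div_iff (hpos _ (by omega))).symm))
  rw [Nat.add_sub_cancel, div_le_invSum_succ_iff (hpos m (by omega))]
  refine ⟨?_, .inr⟩
  rintro (h | h)
  · obtain rfl : m = r := by omega
    exact invSumGap_self_nonneg fun i hi => (hpos i (by omega)).le
  · exact h

theorem stmt8_general (d r : ℕ)
    (lam : ℕ → ℝ) (hpos : ∀ i, i < d → 0 < lam i)
    (hmono : ∀ i j : ℕ, i ≤ j → j < d → lam j ≤ lam i) :
    (∀ ℓ : ℕ, r < ℓ → ℓ ≤ d →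
      ((∀ ℓ' : ℕ, r < ℓ' → ℓ' ≤ d →
          ((ℓ' : ℝ) - r) / ∑ i ∈ Finset.range ℓ', 1 / lam i
            ≤ ((ℓ : ℝ) - r) / ∑ i ∈ Finset.range ℓ, 1 / lam i)
        ↔ (((ℓ : ℝ) - r) / lam (ℓ - 1) ≤ ∑ i ∈ Finset.range ℓ, 1 / lam i ∧
            (ℓ = d ∨ ∑ i ∈ Finset.range ℓ, 1 / lam i ≤ ((ℓ : ℝ) - r) / lam ℓ))))
    ∧ (∀ ℓ₁ ℓ₂ : ℕ, r < ℓ₁ → ℓ₁ ≤ d → r < ℓ₂ → ℓ₂ ≤ d →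
        ((ℓ₁ : ℝ) - r) / lam (ℓ₁ - 1) ≤ ∑ i ∈ Finset.range ℓ₁, 1 / lam i →
        (ℓ₁ = d ∨ ∑ i ∈ Finset.range ℓ₁, 1 / lam i ≤ ((ℓ₁ : ℝ) - r) / lam ℓ₁) →
        ((ℓ₂ : ℝ) - r) / lam (ℓ₂ - 1) ≤ ∑ i ∈ Finset.range ℓ₂, 1 / lam i →
        (ℓ₂ = d ∨ ∑ i ∈ Finset.range ℓ₂, 1 / lam i ≤ ((ℓ₂ : ℝ) - r) / lam ℓ₂) →
        ((ℓ₁ : ℝ) - r) / ∑ i ∈ Finset.range ℓ₁, 1 / lam i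
          = ((ℓ₂ : ℝ) - r) / ∑ i ∈ Finset.range ℓ₂, 1 / lam i) := by
  have hmax := fun ℓ => @forall_div_invSum_le_iff d r ℓ lam hpos hmono
  refine ⟨hmax, fun ℓ₁ ℓ₂ h1r h1d h2r h2d hA1 hB1 hA2 hB2 => le_antisymm ?_ ?_⟩
  · exact (hmax ℓ₂ h2r h2d).2 ⟨hA2, hB2⟩ ℓ₁ h1r h1d
  · exact (hmax ℓ₁ h1r h1d).2 ⟨hA1, hB1⟩ ℓ₂ h2r h2d

/-- With `lam : ℕ → ℝ` positive and nonincreasing on `{0,…,d−1}` (0-based,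
so `λ_i = lam (i−1)` for the paper's 1-based `λ_1 ≥ ⋯ ≥ λ_d > 0`), an index
`ℓ ∈ {r+1,…,d}` maximizes `a_ℓ = (ℓ−r)/Σ_{i=1}^{ℓ} 1/λ_i` over `{r+1,…,d}` iff
`(ℓ−r)/λ_ℓ ≤ Σ_{i=1}^{ℓ} 1/λ_i` and (`ℓ = d` or `Σ_{i=1}^{ℓ} 1/λ_i ≤ (ℓ−r)/λ_{ℓ+1}`);
moreover every index satisfying these two conditions attains the same value of `a_ℓ`. -/
theorem stmt8 (d r : ℕ) (hr : 0 < r) (hrd : r < d)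
    (lam : ℕ → ℝ) (hpos : ∀ i, i < d → 0 < lam i)
    (hmono : ∀ i j : ℕ, i ≤ j → j < d → lam j ≤ lam i) :
    (∀ ℓ : ℕ, r < ℓ → ℓ ≤ d →
      ((∀ ℓ' : ℕ, r < ℓ' → ℓ' ≤ d →
          ((ℓ' : ℝ) - r) / ∑ i ∈ Finset.range ℓ', 1 / lam i
            ≤ ((ℓ : ℝ) - r) / ∑ i ∈ Finset.range ℓ, 1 / lam i)
        ↔ (((ℓ : ℝ) - r) / lam (ℓ - 1) ≤ ∑ i ∈ Finset.range ℓ, 1 / lam i ∧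
            (ℓ = d ∨ ∑ i ∈ Finset.range ℓ, 1 / lam i ≤ ((ℓ : ℝ) - r) / lam ℓ))))
    ∧ (∀ ℓ₁ ℓ₂ : ℕ, r < ℓ₁ → ℓ₁ ≤ d → r < ℓ₂ → ℓ₂ ≤ d →
        ((ℓ₁ : ℝ) - r) / lam (ℓ₁ - 1) ≤ ∑ i ∈ Finset.range ℓ₁, 1 / lam i →
        (ℓ₁ = d ∨ ∑ i ∈ Finset.range ℓ₁, 1 / lam i ≤ ((ℓ₁ : ℝ) - r) / lam ℓ₁) →
        ((ℓ₂ : ℝ) - r) / lam (ℓ₂ - 1) ≤ ∑ i ∈ Finset.range ℓ₂, 1 / lam i →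
        (ℓ₂ = d ∨ ∑ i ∈ Finset.range ℓ₂, 1 / lam i ≤ ((ℓ₂ : ℝ) - r) / lam ℓ₂) →
        ((ℓ₁ : ℝ) - r) / ∑ i ∈ Finset.range ℓ₁, 1 / lam i
          = ((ℓ₂ : ℝ) - r) / ∑ i ∈ Finset.range ℓ₂, 1 / lam i) :=
  stmt8_general d r lam hpos hmono
end

section
/- The sequence a_ℓ = (ℓ − r)/Σ_{i=1}^{ℓ}(1/λ_i), ℓ ∈ {r, r+1, …, d} (with a_r = 0), is unimodal: there exists ℓ₀ ∈ {r+1, …, d} such that a_ℓ is nondecreasing for r ≤ ℓ ≤ ℓ₀ and nonincreasing for ℓ₀ ≤ ℓ ≤ d. Equivalently, the sequence ζ_ℓ = Σ_{i=1}^{ℓ}(1/λ_i) − (ℓ − r)/λ_{ℓ+1}, which has the same sign as a_{ℓ+1} − a_ℓ, is nonincreasing in ℓ ∈ {r, …, d−1} and is positive at ℓ = r. -/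
/-!
With `S_ℓ = Σ_{i<ℓ} 1/λ_i`, clearing denominators gives
`a_{ℓ+1} - a_ℓ = ζ_ℓ / (S_ℓ S_{ℓ+1})`, so the steps of `a` have the sign of `ζ_ℓ`.
Moreover `ζ_ℓ - ζ_{ℓ+1} = (ℓ + 1 - r)(1/λ_{ℓ+1} - 1/λ_ℓ) ≥ 0`, and `ζ_r = S_r > 0`.
Hence `ζ` changes sign at most once, from positive to negative, and `a` increases up to the
index after the last `ℓ` with `ζ_ℓ ≥ 0` and decreases afterwards.
-/

open Finset

theorem exists_monotoneOn_antitoneOn_of_antitoneOn_sign {α β : Type*} [LinearOrder α] [Zero α]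
    [Preorder β] {f : ℕ → β} {g : ℕ → α} {r d : ℕ} (hrd : r < d)
    (hg : AntitoneOn g (Set.Ico r d)) (hgr : 0 ≤ g r)
    (hup : ∀ ℓ ∈ Set.Ico r d, 0 ≤ g ℓ → f ℓ ≤ f (ℓ + 1))
    (hdown : ∀ ℓ ∈ Set.Ico r d, g ℓ < 0 → f (ℓ + 1) ≤ f ℓ) :
    ∃ ℓ₀, r < ℓ₀ ∧ ℓ₀ ≤ d ∧ MonotoneOn f (Set.Icc r ℓ₀) ∧ AntitoneOn f (Set.Icc ℓ₀ d) := by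
  obtain ⟨k, hk⟩ : ∃ k, k = Nat.findGreatest (fun ℓ => 0 ≤ g ℓ) (d - 1) := ⟨_, rfl⟩
  have hrk : r ≤ k := hk ▸ Nat.le_findGreatest (by omega) hgr
  have hkd : k ≤ d - 1 := hk ▸ Nat.findGreatest_le _
  have hgk : 0 ≤ g k := hk ▸ Nat.findGreatest_spec (P := fun ℓ => 0 ≤ g ℓ) (by omega) hgr
  have hneg : ∀ ℓ, k < ℓ → ℓ ≤ d - 1 → g ℓ < 0 := fun ℓ h₁ h₂ =>
    not_le.mp (Nat.findGreatest_is_greatest (hk ▸ h₁) h₂)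
  refine ⟨k + 1, by omega, by omega, ?_, ?_⟩
  · refine monotoneOn_of_le_succ Set.ordConnected_Icc fun ℓ _ hℓ hℓ' => ?_
    rw [Nat.succ_eq_succ] at hℓ' ⊢
    have hℓk : ℓ ≤ k := by simp only [Set.mem_Icc] at hℓ'; omega
    exact hup ℓ ⟨hℓ.1, by omega⟩ (hgk.trans (hg ⟨hℓ.1, by omega⟩ ⟨hrk, by omega⟩ hℓk))
  · refine antitoneOn_of_succ_le Set.ordConnected_Icc fun ℓ _ hℓ hℓ' => ?_
    rw [Nat.succ_eq_succ] at hℓ' ⊢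
    simp only [Set.mem_Icc] at hℓ hℓ'
    exact hdown ℓ ⟨by omega, by omega⟩ (hneg ℓ (by omega) (by omega))

theorem div_add_one_sub_div {K : Type*} [Field K] {S t μ : K} (hS : S ≠ 0) (hSμ : S + μ ≠ 0) :
    (t + 1) / (S + μ) - t / S = (S - t * μ) / (S * (S + μ)) := by
  field_simp
  ring

theorem sum_range_one_div_pos {lam : ℕ → ℝ} {ℓ : ℕ} (hℓ : 0 < ℓ) (hpos : ∀ i < ℓ, 0 < lam i) :
    0 < ∑ i ∈ range ℓ, 1 / lam i :=
  sum_pos (fun i hi => one_div_pos.mpr (hpos i (mem_range.mp hi))) (nonempty_range_iff.mpr hℓ.ne')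

section Unimodal

variable (lam : ℕ → ℝ) (r : ℕ)

/-- The paper's `ζ_ℓ`; indices are 0-based, `lam i` standing for `λ_{i+1}`. -/
noncomputable def zeta (ℓ : ℕ) : ℝ := (∑ i ∈ range ℓ, 1 / lam i) - ((ℓ : ℝ) - r) / lam ℓ

noncomputable def ratio (ℓ : ℕ) : ℝ := ((ℓ : ℝ) - r) / ∑ i ∈ range ℓ, 1 / lam i

theorem zeta_sub_zeta_succ (ℓ : ℕ) :
    zeta lam r ℓ - zeta lam r (ℓ + 1) = ((ℓ : ℝ) + 1 - r) * (1 / lam (ℓ + 1) - 1 / lam ℓ) := by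
  simp only [zeta, sum_range_succ]
  push_cast
  ring

variable {lam r}

theorem zeta_succ_le {ℓ : ℕ} (hrℓ : r ≤ ℓ) (hpos : 0 < lam (ℓ + 1))
    (hle : lam (ℓ + 1) ≤ lam ℓ) : zeta lam r (ℓ + 1) ≤ zeta lam r ℓ := by
  have hcoef : (0 : ℝ) ≤ (ℓ : ℝ) + 1 - r := by
    have : (r : ℝ) ≤ ℓ := by exact_mod_cast hrℓ
    linarith
  have hinv : 1 / lam ℓ ≤ 1 / lam (ℓ + 1) := one_div_le_one_div_of_le hpos hle
  linarith [zeta_sub_zeta_succ lam r ℓ, mul_nonneg hcoef (sub_nonneg.mpr hinv)]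

theorem ratio_succ_sub_ratio {ℓ : ℕ} (hℓ : 0 < ℓ) (hpos : ∀ i ≤ ℓ, 0 < lam i) :
    ratio lam r (ℓ + 1) - ratio lam r ℓ =
      zeta lam r ℓ / ((∑ i ∈ range ℓ, 1 / lam i) * ∑ i ∈ range (ℓ + 1), 1 / lam i) := by
  have hS := sum_range_one_div_pos hℓ fun i hi => hpos i hi.le
  have hS' := sum_range_one_div_pos ℓ.succ_pos fun i hi => hpos i (Nat.lt_succ_iff.mp hi)
  rw [sum_range_succ] at hS'
  simp only [ratio, zeta, sum_range_succ, Nat.cast_succ, add_sub_right_comm _ (1 : ℝ),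
    div_eq_mul_one_div ((ℓ : ℝ) - r) (lam ℓ)]
  exact div_add_one_sub_div hS.ne' hS'.ne'

theorem zeta_nonneg_iff_and_nonpos_iff {ℓ : ℕ} (hℓ : 0 < ℓ) (hpos : ∀ i ≤ ℓ, 0 < lam i) :
    (0 ≤ zeta lam r ℓ ↔ ratio lam r ℓ ≤ ratio lam r (ℓ + 1)) ∧
      (zeta lam r ℓ ≤ 0 ↔ ratio lam r (ℓ + 1) ≤ ratio lam r ℓ) := by
  have hden : 0 < (∑ i ∈ range ℓ, 1 / lam i) * ∑ i ∈ range (ℓ + 1), 1 / lam i :=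
    mul_pos (sum_range_one_div_pos hℓ fun i hi => hpos i hi.le)
      (sum_range_one_div_pos ℓ.succ_pos fun i hi => hpos i (Nat.lt_succ_iff.mp hi))
  rw [← sub_nonneg (a := ratio lam r (ℓ + 1)), ← sub_nonpos (a := ratio lam r (ℓ + 1)),
    ratio_succ_sub_ratio hℓ hpos, le_div_iff₀ hden, div_le_iff₀ hden, zero_mul]
  exact ⟨Iff.rfl, Iff.rfl⟩

end Unimodal

/-- Unimodality: with `lam : ℕ → ℝ` positive and nonincreasing on
`{0,…,d−1}` (0-based, `λ_i = lam (i−1)`), the sequence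
`a_ℓ = (ℓ−r)/Σ_{i=1}^{ℓ} 1/λ_i` for `ℓ ∈ {r,…,d}` (with `a_r = 0`) is unimodal: there is
`ℓ₀ ∈ {r+1,…,d}` with `a` nondecreasing on `[r, ℓ₀]` and nonincreasing on `[ℓ₀, d]`.
Equivalently, `ζ_ℓ = Σ_{i=1}^{ℓ} 1/λ_i − (ℓ−r)/λ_{ℓ+1}` is nonincreasing on `{r,…,d−1}`,
positive at `ℓ = r`, and has the same sign as `a_{ℓ+1} − a_ℓ`. -/
theorem stmt9 (d r : ℕ) (hr : 0 < r) (hrd : r < d)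
    (lam : ℕ → ℝ) (hpos : ∀ i, i < d → 0 < lam i)
    (hmono : ∀ i j : ℕ, i ≤ j → j < d → lam j ≤ lam i) :
    let a : ℕ → ℝ := fun ℓ => ((ℓ : ℝ) - r) / ∑ i ∈ Finset.range ℓ, 1 / lam i
    let z : ℕ → ℝ := fun ℓ => (∑ i ∈ Finset.range ℓ, 1 / lam i) - ((ℓ : ℝ) - r) / lam ℓ
    (∃ ℓ₀ : ℕ, r < ℓ₀ ∧ ℓ₀ ≤ d ∧
        (∀ ℓ ℓ' : ℕ, r ≤ ℓ → ℓ ≤ ℓ' → ℓ' ≤ ℓ₀ → a ℓ ≤ a ℓ') ∧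
        (∀ ℓ ℓ' : ℕ, ℓ₀ ≤ ℓ → ℓ ≤ ℓ' → ℓ' ≤ d → a ℓ' ≤ a ℓ))
    ∧ (∀ ℓ : ℕ, r ≤ ℓ → ℓ + 1 ≤ d - 1 → z (ℓ + 1) ≤ z ℓ)
    ∧ 0 < z r
    ∧ (∀ ℓ : ℕ, r ≤ ℓ → ℓ ≤ d - 1 →
        ((0 ≤ z ℓ ↔ a ℓ ≤ a (ℓ + 1)) ∧ (z ℓ ≤ 0 ↔ a (ℓ + 1) ≤ a ℓ))) := by
  intro a z
  have zeta_step : ∀ ℓ, r ≤ ℓ → ℓ + 1 ≤ d - 1 → z (ℓ + 1) ≤ z ℓ := fun ℓ hℓ hℓd =>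
    zeta_succ_le hℓ (hpos _ (by omega)) (hmono _ _ ℓ.le_succ (by omega))
  have zeta_r : 0 < z r := by
    simpa [z] using sum_range_one_div_pos hr fun i hi => hpos i (hi.trans hrd)
  have sign : ∀ ℓ, r ≤ ℓ → ℓ ≤ d - 1 →
      ((0 ≤ z ℓ ↔ a ℓ ≤ a (ℓ + 1)) ∧ (z ℓ ≤ 0 ↔ a (ℓ + 1) ≤ a ℓ)) := fun ℓ hℓ hℓd =>
    zeta_nonneg_iff_and_nonpos_iff (by omega) fun i hi => hpos i (by omega)
  have hz_anti : AntitoneOn z (Set.Ico r d) := antitoneOn_of_succ_le Set.ordConnected_Ico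
    fun ℓ _ hℓ hℓ' => by
      rw [Nat.succ_eq_succ] at hℓ' ⊢
      exact zeta_step ℓ hℓ.1 (by have := hℓ'.2; omega)
  obtain ⟨ℓ₀, hrℓ₀, hℓ₀d, hup, hdown⟩ := exists_monotoneOn_antitoneOn_of_antitoneOn_sign hrd
    hz_anti zeta_r.le (fun ℓ hℓ => (sign ℓ hℓ.1 (Nat.le_sub_one_of_lt hℓ.2)).1.mp)
    (fun ℓ hℓ hz => (sign ℓ hℓ.1 (Nat.le_sub_one_of_lt hℓ.2)).2.mp hz.le)
  exact ⟨⟨ℓ₀, hrℓ₀, hℓ₀d,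
      fun ℓ ℓ' h₁ h₂ h₃ => hup ⟨h₁, h₂.trans h₃⟩ ⟨h₁.trans h₂, h₃⟩ h₂,
      fun ℓ ℓ' h₁ h₂ h₃ => hdown ⟨h₁, h₂.trans h₃⟩ ⟨h₁.trans h₂, h₃⟩ h₂⟩,
    zeta_step, zeta_r, sign⟩
end

section
/- The pure minimax regret in the Hilbert space MSE setting equals λ_{r+1}: the infimum over all subspaces W ⊆ H with dim W ≤ r of the supremum over f ∈ F of inf_{w ∈ W} ‖f − w‖² equals λ_{r+1}. Moreover, the subspace W* = span{φ_1, …, φ_r} achieves sup_{f ∈ F} inf_{w ∈ W*} ‖f − w‖² = λ_{r+1}, and the supremum over F is attained at f* = √λ_{r+1} · φ_{r+1}. -/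
/-!
Write `c_j = ⟪f, φ_j⟫`. For `f ∈ F`, subtracting its first `r` Fourier terms leaves the tail
`∑_{j ≥ r} c_j² ≤ λ_r ∑_{j ≥ r} c_j² / λ_j ≤ λ_r`, because `λ` is nonincreasing; so
`span {φ_j : j < r}` has worst-case error at most `λ_r`, attained at `√λ_r • φ_r`.
Conversely, if `dim W ≤ r`, the `(r+1)`-dimensional space `span {φ_j : j ≤ r}` contains a nonzero
vector orthogonal to `W`. Rescaled to norm `√λ_r` it lies in `F` (its coefficients live on
`j ≤ r`, where `λ_j ≥ λ_r`), and its squared distance to `W` is its squared norm `λ_r`.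
-/

open scoped RealInnerProductSpace

open Submodule Module

theorem rank_span_image_Iio_le {R M : Type*} [Ring R] [StrongRankCondition R] [AddCommGroup M]
    [Module R M] (v : ℕ → M) (r : ℕ) : Module.rank R (span R (v '' Set.Iio r)) ≤ r := by
  classical
  have hv : v '' Set.Iio r = ↑((Finset.range r).image v) := by simp
  rw [hv]
  exact (rank_span_finset_le _).trans <| by exact_mod_cast Finset.card_image_le.trans (by simp)

theorem tsum_nat_add_le_mul_tsum_div {a lam : ℕ → ℝ} (ha : ∀ j, 0 ≤ a j) (hpos : ∀ j, 0 < lam j)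
    (hmono : Antitone lam) (hsa : Summable a) (hs : Summable fun j => a j / lam j) (r : ℕ) :
    ∑' j, a (j + r) ≤ lam r * ∑' j, a j / lam j := by
  have hterm (j : ℕ) : a (j + r) ≤ lam r * (a (j + r) / lam (j + r)) := by
    rw [mul_div_left_comm]
    exact le_mul_of_one_le_right (ha _)
      ((one_le_div (hpos _)).mpr (hmono (Nat.le_add_left r j)))
  have htail : ∑' j, a (j + r) / lam (j + r) ≤ ∑' j, a j / lam j :=
    tsum_comp_le_tsum_of_inj hs (fun j => div_nonneg (ha j) (hpos j).le) (add_left_injective r)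
  calc ∑' j, a (j + r) ≤ ∑' j, lam r * (a (j + r) / lam (j + r)) :=
        ((summable_nat_add_iff r).mpr hsa).tsum_le_tsum hterm
          (((summable_nat_add_iff r).mpr hs).mul_left _)
    _ = lam r * ∑' j, a (j + r) / lam (j + r) := tsum_mul_left
    _ ≤ lam r * ∑' j, a j / lam j := mul_le_mul_of_nonneg_left htail (hpos r).le

theorem Submodule.exists_mem_orthogonal_ne_zero_of_finrank_lt {𝕜 E : Type*} [RCLike 𝕜]
    [NormedAddCommGroup E] [InnerProductSpace 𝕜 E] (V W : Submodule 𝕜 E)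
    [FiniteDimensional 𝕜 V] [FiniteDimensional 𝕜 W] (h : finrank 𝕜 W < finrank 𝕜 V) :
    ∃ g ∈ V, g ∈ Wᗮ ∧ g ≠ 0 := by
  obtain ⟨g, hg, hg0⟩ := Submodule.exists_mem_ne_zero_of_ne_bot <|
    LinearMap.ker_ne_bot_of_finrank_lt (f := W.orthogonalProjectionOnto.toLinearMap ∘ₗ V.subtype) h
  exact ⟨g, g.2, orthogonalProjectionOnto_eq_zero_iff.mp hg, by simpa using hg0⟩

section

variable {H : Type*} [NormedAddCommGroup H] [InnerProductSpace ℝ H]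

noncomputable def sqInfDist (W : Submodule ℝ H) (f : H) : ℝ :=
  sInf {t : ℝ | ∃ w ∈ W, t = ‖f - w‖ ^ 2}

noncomputable def worstSqInfDist (F : Set H) (W : Submodule ℝ H) : ℝ :=
  sSup {u : ℝ | ∃ f ∈ F, u = sqInfDist W f}

variable {W : Submodule ℝ H} {phi : ℕ → H} {lam : ℕ → ℝ} {f : H} {r : ℕ}

theorem sqInfDist_le {w : H} (hw : w ∈ W) : sqInfDist W f ≤ ‖f - w‖ ^ 2 :=
  csInf_le ⟨0, by rintro t ⟨w, -, rfl⟩; positivity⟩ ⟨w, hw, rfl⟩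

theorem sqInfDist_le_norm_sq : sqInfDist W f ≤ ‖f‖ ^ 2 := by
  simpa using sqInfDist_le (f := f) W.zero_mem

theorem sqInfDist_of_mem_orthogonal (hf : f ∈ Wᗮ) : sqInfDist W f = ‖f‖ ^ 2 := by
  refine IsLeast.csInf_eq ⟨⟨0, W.zero_mem, by rw [sub_zero]⟩, ?_⟩
  rintro t ⟨w, hw, rfl⟩
  rw [norm_sub_sq_real, inner_left_of_mem_orthogonal hw hf]
  nlinarith [sq_nonneg ‖w‖]

theorem Orthonormal.hasSum_inner_sq [CompleteSpace H] {ι : Type*} {v : ι → H}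
    (hv : Orthonormal ℝ v) (htot : (span ℝ (Set.range v)).topologicalClosure = ⊤) (f : H) :
    HasSum (fun j => ⟪f, v j⟫ ^ 2) (‖f‖ ^ 2) := by
  have h := (HilbertBasis.mk hv htot.ge).hasSum_inner_mul_inner f f
  rw [HilbertBasis.coe_mk] at h
  simpa [real_inner_comm, sq, real_inner_self_eq_norm_sq] using h

theorem Orthonormal.norm_sub_sum_inner_smul_sq {ι : Type*} {v : ι → H} (hv : Orthonormal ℝ v)
    (s : Finset ι) (f : H) :
    ‖f - ∑ j ∈ s, ⟪f, v j⟫ • v j‖ ^ 2 = ‖f‖ ^ 2 - ∑ j ∈ s, ⟪f, v j⟫ ^ 2 := by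
  have hfs : ⟪f, ∑ j ∈ s, ⟪f, v j⟫ • v j⟫ = ∑ j ∈ s, ⟪f, v j⟫ ^ 2 := by
    simp only [inner_sum, real_inner_smul_right, sq]
  have hss : ‖∑ j ∈ s, ⟪f, v j⟫ • v j‖ ^ 2 = ∑ j ∈ s, ⟪f, v j⟫ ^ 2 := by
    rw [← real_inner_self_eq_norm_sq, sum_inner]
    refine Finset.sum_congr rfl fun j hj => ?_
    rw [real_inner_smul_left, hv.inner_right_sum _ hj, sq]
  rw [norm_sub_sq_real, hfs, hss]
  ring

def ellipsoid (phi : ℕ → H) (lam : ℕ → ℝ) : Set H :=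
  {f | (Summable fun j => ⟪f, phi j⟫ ^ 2 / lam j) ∧ (∑' j, ⟪f, phi j⟫ ^ 2 / lam j) ≤ 1}

theorem mem_ellipsoid_of_inner_eq_zero (hphi : Orthonormal ℝ phi) (hpos : ∀ j, 0 < lam j)
    (hmono : Antitone lam) (hf : ∀ j, r < j → ⟪f, phi j⟫ = 0) (hn : ‖f‖ ^ 2 ≤ lam r) :
    f ∈ ellipsoid phi lam := by
  have hzero : ∀ j ∉ Finset.range (r + 1), ⟪f, phi j⟫ ^ 2 / lam j = 0 := fun j hj => by
    rw [hf j (by simpa [Nat.lt_succ_iff] using hj)]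
    simp
  refine ⟨summable_of_ne_finset_zero hzero, ?_⟩
  have hbessel : ∑ j ∈ Finset.range (r + 1), ⟪f, phi j⟫ ^ 2 ≤ ‖f‖ ^ 2 := by
    simpa [real_inner_comm] using hphi.sum_inner_products_le f (s := Finset.range (r + 1))
  calc ∑' j, ⟪f, phi j⟫ ^ 2 / lam j = ∑ j ∈ Finset.range (r + 1), ⟪f, phi j⟫ ^ 2 / lam j :=
        tsum_eq_sum hzero
    _ ≤ ∑ j ∈ Finset.range (r + 1), ⟪f, phi j⟫ ^ 2 / lam r :=
        Finset.sum_le_sum fun j hj => div_le_div_of_nonneg_left (sq_nonneg _) (hpos r)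
          (hmono (Nat.lt_succ_iff.mp (Finset.mem_range.mp hj)))
    _ ≤ 1 := by
        rw [← Finset.sum_div, div_le_one (hpos r)]
        exact hbessel.trans hn

theorem norm_sqrt_smul_sq (hphi : Orthonormal ℝ phi) (hr : 0 ≤ lam r) :
    ‖√(lam r) • phi r‖ ^ 2 = lam r := by
  rw [norm_smul, hphi.1 r, mul_one, Real.norm_of_nonneg (Real.sqrt_nonneg _), Real.sq_sqrt hr]

theorem sqrt_smul_mem_ellipsoid (hphi : Orthonormal ℝ phi) (hpos : ∀ j, 0 < lam j)
    (hmono : Antitone lam) (r : ℕ) : √(lam r) • phi r ∈ ellipsoid phi lam :=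
  mem_ellipsoid_of_inner_eq_zero hphi hpos hmono
    (fun j hj => by rw [real_inner_smul_left, hphi.inner_eq_zero hj.ne, mul_zero])
    (norm_sqrt_smul_sq hphi (hpos r).le).le

theorem sqInfDist_span_sqrt_smul (hphi : Orthonormal ℝ phi) (hr : 0 ≤ lam r) :
    sqInfDist (span ℝ (phi '' Set.Iio r)) (√(lam r) • phi r) = lam r := by
  have hortho : span ℝ {phi r} ⟂ span ℝ (phi '' Set.Iio r) :=
    isOrtho_span.mpr <| by
      rintro _ rfl _ ⟨j, hj, rfl⟩
      exact hphi.inner_eq_zero (ne_of_gt hj)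
  rw [sqInfDist_of_mem_orthogonal (hortho.le (smul_mem _ _ (mem_span_singleton_self _))),
    norm_sqrt_smul_sq hphi hr]

theorem exists_mem_ellipsoid_mem_orthogonal (hphi : Orthonormal ℝ phi) (hpos : ∀ j, 0 < lam j)
    (hmono : Antitone lam) (W : Submodule ℝ H) [FiniteDimensional ℝ W]
    (hW : finrank ℝ W ≤ r) : ∃ f ∈ ellipsoid phi lam, f ∈ Wᗮ ∧ ‖f‖ ^ 2 = lam r := by
  let V := span ℝ (Set.range (phi ∘ Fin.val : Fin (r + 1) → H))
  have hV : finrank ℝ V = r + 1 := by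
    rw [finrank_span_eq_card (hphi.linearIndependent.comp _ Fin.val_injective), Fintype.card_fin]
  have : FiniteDimensional ℝ V := Module.finite_of_finrank_eq_succ hV
  obtain ⟨g, hgV, hgW, hg0⟩ := V.exists_mem_orthogonal_ne_zero_of_finrank_lt W (by omega)
  have hVj (j : ℕ) (hj : r < j) : V ⟂ span ℝ {phi j} :=
    isOrtho_span.mpr <| by
      rintro _ ⟨i, rfl⟩ _ rfl
      exact hphi.inner_eq_zero (by omega)
  set f := (√(lam r) / ‖g‖) • g
  have hn : ‖f‖ ^ 2 = lam r := by
    rw [norm_smul, mul_pow, Real.norm_eq_abs, sq_abs, div_pow, Real.sq_sqrt (hpos r).le]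
    field_simp [norm_ne_zero_iff.mpr hg0]
  have hcoef (j : ℕ) (hj : r < j) : ⟪f, phi j⟫ = 0 := by
    rw [real_inner_smul_left, (hVj j hj).inner_eq hgV (mem_span_singleton_self _), mul_zero]
  exact ⟨f, mem_ellipsoid_of_inner_eq_zero hphi hpos hmono hcoef hn.le, Wᗮ.smul_mem _ hgW, hn⟩

variable [CompleteSpace H]

theorem tsum_nat_add_inner_sq_le_of_mem_ellipsoid (hphi : Orthonormal ℝ phi)
    (htot : (span ℝ (Set.range phi)).topologicalClosure = ⊤) (hpos : ∀ j, 0 < lam j)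
    (hmono : Antitone lam) (hf : f ∈ ellipsoid phi lam) (r : ℕ) :
    ∑' j, ⟪f, phi (j + r)⟫ ^ 2 ≤ lam r := by
  have h := tsum_nat_add_le_mul_tsum_div (fun j => sq_nonneg _) hpos hmono
    (hphi.hasSum_inner_sq htot f).summable hf.1 r
  exact h.trans (mul_le_of_le_one_right (hpos r).le hf.2)

theorem norm_sq_le_of_mem_ellipsoid (hphi : Orthonormal ℝ phi)
    (htot : (span ℝ (Set.range phi)).topologicalClosure = ⊤) (hpos : ∀ j, 0 < lam j)
    (hmono : Antitone lam) (hf : f ∈ ellipsoid phi lam) : ‖f‖ ^ 2 ≤ lam 0 := by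
  rw [← (hphi.hasSum_inner_sq htot f).tsum_eq]
  exact tsum_nat_add_inner_sq_le_of_mem_ellipsoid hphi htot hpos hmono hf 0

theorem sqInfDist_span_le_of_mem_ellipsoid (hphi : Orthonormal ℝ phi)
    (htot : (span ℝ (Set.range phi)).topologicalClosure = ⊤) (hpos : ∀ j, 0 < lam j)
    (hmono : Antitone lam) (hf : f ∈ ellipsoid phi lam) (r : ℕ) :
    sqInfDist (span ℝ (phi '' Set.Iio r)) f ≤ lam r := by
  have hmem : ∑ j ∈ Finset.range r, ⟪f, phi j⟫ • phi j ∈ span ℝ (phi '' Set.Iio r) :=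
    Submodule.sum_mem _ fun j hj => Submodule.smul_mem _ _
      (subset_span ⟨j, Finset.mem_range.mp hj, rfl⟩)
  have hsplit := (hphi.hasSum_inner_sq htot f).summable.sum_add_tsum_nat_add r
  rw [(hphi.hasSum_inner_sq htot f).tsum_eq] at hsplit
  calc sqInfDist (span ℝ (phi '' Set.Iio r)) f
      ≤ ‖f - ∑ j ∈ Finset.range r, ⟪f, phi j⟫ • phi j‖ ^ 2 := sqInfDist_le hmem
    _ = ∑' j, ⟪f, phi (j + r)⟫ ^ 2 := by
        rw [hphi.norm_sub_sum_inner_smul_sq, ← hsplit, add_sub_cancel_left]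
    _ ≤ lam r := tsum_nat_add_inner_sq_le_of_mem_ellipsoid hphi htot hpos hmono hf r

theorem worstSqInfDist_span_eq (hphi : Orthonormal ℝ phi)
    (htot : (span ℝ (Set.range phi)).topologicalClosure = ⊤) (hpos : ∀ j, 0 < lam j)
    (hmono : Antitone lam) (r : ℕ) :
    worstSqInfDist (ellipsoid phi lam) (span ℝ (phi '' Set.Iio r)) = lam r := by
  refine IsGreatest.csSup_eq ⟨⟨_, sqrt_smul_mem_ellipsoid hphi hpos hmono r,
    (sqInfDist_span_sqrt_smul hphi (hpos r).le).symm⟩, ?_⟩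
  rintro u ⟨f, hf, rfl⟩
  exact sqInfDist_span_le_of_mem_ellipsoid hphi htot hpos hmono hf r

theorem lam_le_worstSqInfDist (hphi : Orthonormal ℝ phi)
    (htot : (span ℝ (Set.range phi)).topologicalClosure = ⊤) (hpos : ∀ j, 0 < lam j)
    (hmono : Antitone lam) {W : Submodule ℝ H} (hW : Module.rank ℝ W ≤ r) :
    lam r ≤ worstSqInfDist (ellipsoid phi lam) W := by
  have : FiniteDimensional ℝ W :=
    Module.rank_lt_aleph0_iff.mp (hW.trans_lt Cardinal.natCast_lt_aleph0)
  obtain ⟨f, hfF, hfW, hn⟩ :=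
    exists_mem_ellipsoid_mem_orthogonal hphi hpos hmono W (finrank_le_of_rank_le hW)
  have hbdd : BddAbove {u | ∃ f ∈ ellipsoid phi lam, u = sqInfDist W f} := by
    refine ⟨lam 0, ?_⟩
    rintro u ⟨f, hf, rfl⟩
    exact sqInfDist_le_norm_sq.trans (norm_sq_le_of_mem_ellipsoid hphi htot hpos hmono hf)
  calc lam r = sqInfDist W f := by rw [sqInfDist_of_mem_orthogonal hfW, hn]
    _ ≤ worstSqInfDist (ellipsoid phi lam) W := le_csSup hbdd ⟨f, hfF, rfl⟩

end

theorem stmt16_general {H : Type*} [NormedAddCommGroup H] [InnerProductSpace ℝ H]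
    [CompleteSpace H]
    (phi : ℕ → H) (hphi : Orthonormal ℝ phi)
    (htot : (Submodule.span ℝ (Set.range phi)).topologicalClosure = ⊤)
    (lam : ℕ → ℝ) (hpos : ∀ j, 0 < lam j) (hmono : Antitone lam)
    (r : ℕ) :
    let F : Set H := { f | (Summable fun j => ⟪f, phi j⟫ ^ 2 / lam j) ∧
        (∑' j, ⟪f, phi j⟫ ^ 2 / lam j) ≤ 1 }
    let Wstar : Submodule ℝ H := Submodule.span ℝ (phi '' Set.Iio r)
    let fstar : H := Real.sqrt (lam r) • phi r
    (sInf { v : ℝ | ∃ W : Submodule ℝ H, Module.rank ℝ ↥W ≤ (r : Cardinal) ∧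
        v = sSup { u : ℝ | ∃ f ∈ F,
            u = sInf { t : ℝ | ∃ w ∈ W, t = ‖f - w‖ ^ 2 } } }
      = lam r)
    ∧ (sSup { u : ℝ | ∃ f ∈ F,
          u = sInf { t : ℝ | ∃ w ∈ Wstar, t = ‖f - w‖ ^ 2 } } = lam r)
    ∧ fstar ∈ F
    ∧ sInf { t : ℝ | ∃ w ∈ Wstar, t = ‖fstar - w‖ ^ 2 } = lam r := by
  intro F Wstar fstar
  show sInf {v | ∃ W : Submodule ℝ H, Module.rank ℝ W ≤ r ∧
        v = worstSqInfDist (ellipsoid phi lam) W} = lam r ∧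
      worstSqInfDist (ellipsoid phi lam) Wstar = lam r ∧
      fstar ∈ ellipsoid phi lam ∧ sqInfDist Wstar fstar = lam r
  have hWstar := worstSqInfDist_span_eq hphi htot hpos hmono r
  refine ⟨IsLeast.csInf_eq ⟨⟨Wstar, rank_span_image_Iio_le phi r, hWstar.symm⟩, ?_⟩, hWstar,
    sqrt_smul_mem_ellipsoid hphi hpos hmono r, sqInfDist_span_sqrt_smul hphi (hpos r).le⟩
  rintro v ⟨W, hW, rfl⟩
  exact lam_le_worstSqInfDist hphi htot hpos hmono hW

/-- Hilbert-space MSE setting: `H` a real separable Hilbert space with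
orthonormal basis `(φ_j)` (indexed 0-based by `ℕ`), `lam` a nonincreasing positive sequence
tending to `0`, and `F = {f : Σ_j ⟨f, φ_j⟩²/λ_j ≤ 1}`. The infimum over subspaces `W` of
dimension `≤ r` of `sup_{f ∈ F} inf_{w ∈ W} ‖f − w‖²` equals `λ_{r+1}` (0-based: `lam r`);
the subspace `W* = span{φ_1,…,φ_r}` achieves it, and the supremum over `F` is attained at
`f* = √λ_{r+1} · φ_{r+1}`. -/
theorem stmt16 {H : Type*} [NormedAddCommGroup H] [InnerProductSpace ℝ H]
    [CompleteSpace H]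
    (phi : ℕ → H) (hphi : Orthonormal ℝ phi)
    (htot : (Submodule.span ℝ (Set.range phi)).topologicalClosure = ⊤)
    (lam : ℕ → ℝ) (hpos : ∀ j, 0 < lam j) (hmono : Antitone lam)
    (hlim : Filter.Tendsto lam Filter.atTop (nhds 0))
    (r : ℕ) (hr : 0 < r) :
    let F : Set H := { f | (Summable fun j => ⟪f, phi j⟫ ^ 2 / lam j) ∧
        (∑' j, ⟪f, phi j⟫ ^ 2 / lam j) ≤ 1 }
    let Wstar : Submodule ℝ H := Submodule.span ℝ (phi '' Set.Iio r)
    let fstar : H := Real.sqrt (lam r) • phi r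
    (sInf { v : ℝ | ∃ W : Submodule ℝ H, Module.rank ℝ ↥W ≤ (r : Cardinal) ∧
        v = sSup { u : ℝ | ∃ f ∈ F,
            u = sInf { t : ℝ | ∃ w ∈ W, t = ‖f - w‖ ^ 2 } } }
      = lam r)
    ∧ (sSup { u : ℝ | ∃ f ∈ F,
          u = sInf { t : ℝ | ∃ w ∈ Wstar, t = ‖f - w‖ ^ 2 } } = lam r)
    ∧ fstar ∈ F
    ∧ sInf { t : ℝ | ∃ w ∈ Wstar, t = ‖fstar - w‖ ^ 2 } = lam r :=
  stmt16_general phi hphi htot lam hpos hmono r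
end
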